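/- arXiv:1905.11011 — 11 statements merged into one kernel-verified Lean document; each statement's English description precedes it below -/
import Mathlib

section
/- For the heavy-ball method with modal dynamics Â(λ) = [[0,1],[-β, 1+β-αλ]], the modal variance amplification is Ĵ_hb(λ) = σ²(1+β)/(αλ(1-β)(2(1+β) - αλ)) for all stabilizing parameters. -/
open Matrix

/-!
Writing `Â = !![0, 1; a, b]`, the Lyapunov equation reads entrywise
`p₀₀ = p₁₁`, `p₀₁ = a p₁₀ + b p₁₁`, `p₁₀ = a p₀₁ + b p₁₁` and
`p₁₁ = a² p₀₀ + a b (p₀₁ + p₁₀) + b² p₁₁ + σ²`. Adding the two off-diagonal equations gives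
`(1 - a)(p₀₁ + p₁₀) = 2 b p₁₁`; substituting into the last one, the variance `p₀₀ = p₁₁`
satisfies `p₀₀ (1 + a)(1 - a - b)(1 - a + b) = σ² (1 - a)`. For the heavy-ball method
`a = -β` and `b = 1 + β - αλ`, so the three factors are `1 - β`, `αλ` and `2(1 + β) - αλ`,
all positive for stabilizing parameters.
-/

section Companion

variable {R : Type*} [CommRing R]

theorem companion_mul_mul_transpose (a b : R) (P : Matrix (Fin 2) (Fin 2) R) :
    !![0, 1; a, b] * P * (!![0, 1; a, b])ᵀ =
      !![P 1 1, a * P 1 0 + b * P 1 1;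
        a * P 0 1 + b * P 1 1, a ^ 2 * P 0 0 + a * b * (P 0 1 + P 1 0) + b ^ 2 * P 1 1] := by
  ext i j
  fin_cases i <;> fin_cases j <;> simp [mul_apply, vecMul, dotProduct, Fin.sum_univ_two] <;> ring

theorem companion_lyapunov_mul_eq (a b s : R) (P : Matrix (Fin 2) (Fin 2) R)
    (hP : P = !![0, 1; a, b] * P * (!![0, 1; a, b])ᵀ + s • (!![(0 : R); 1] * (!![(0 : R); 1])ᵀ)) :
    P 0 0 * ((1 + a) * (1 - a - b) * (1 - a + b)) = s * (1 - a) := by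
  have hB : !![(0 : R); 1] * (!![(0 : R); 1])ᵀ = !![0, 0; 0, 1] := by
    ext i j; fin_cases i <;> fin_cases j <;> simp [mul_apply]
  rw [companion_mul_mul_transpose, hB] at hP
  have h00 := congrFun (congrFun hP 0) 0
  have h01 := congrFun (congrFun hP 0) 1
  have h10 := congrFun (congrFun hP 1) 0
  have h11 := congrFun (congrFun hP 1) 1
  simp only [Fin.isValue, smul_of, smul_cons, smul_eq_mul, mul_zero, smul_empty, mul_one, Matrix.add_apply,
    of_apply, cons_val', cons_val_zero, cons_val_fin_one, add_zero, cons_val_one] at h00 h01 h10 h11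
  linear_combination (1 - a - 2 * a * b ^ 2 - (1 - a) * b ^ 2) * h00 + a * b * (h01 + h10) + (1 - a) * h11

theorem companion_lyapunov_apply_zero_zero {K : Type*} [Field K] (a b s : K)
    (P : Matrix (Fin 2) (Fin 2) K) (ha : 1 + a ≠ 0) (hab : 1 - a - b ≠ 0) (hab' : 1 - a + b ≠ 0)
    (hP : P = !![0, 1; a, b] * P * (!![0, 1; a, b])ᵀ + s • (!![(0 : K); 1] * (!![(0 : K); 1])ᵀ)) :
    P 0 0 = s * (1 - a) / ((1 + a) * (1 - a - b) * (1 - a + b)) := by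
  rw [eq_div_iff (by simp [ha, hab, hab']), companion_lyapunov_mul_eq a b s P hP]

end Companion

theorem stmt_2_general (α β lam σ : ℝ) (hβ1 : β < 1)
    (h1 : 0 < α * lam) (h2 : α * lam < 2 * (1 + β))
    (P : Matrix (Fin 2) (Fin 2) ℝ)
    (hlyap : P = !![0, 1; -β, 1 + β - α * lam] * P * (!![0, 1; -β, 1 + β - α * lam])ᵀ
        + σ ^ 2 • (!![(0 : ℝ); 1] * (!![(0 : ℝ); 1])ᵀ)) :
    P 0 0 = σ ^ 2 * (1 + β) / (α * lam * (1 - β) * (2 * (1 + β) - α * lam)) := by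
  rw [companion_lyapunov_apply_zero_zero _ _ _ P (by linarith) (by linarith) (by linarith) hlyap]
  congr 1 <;> ring

/-- Modal variance amplification of the heavy-ball method: the (1,1) entry of
the solution of the 2×2 Lyapunov equation for `Â = [[0,1],[-β, 1+β-αλ]]`,
`B̂ = (0,1)ᵀ` equals `σ²(1+β)/(αλ(1-β)(2(1+β)-αλ))` for all stabilizing
parameters (`0 ≤ β < 1`, `0 < αλ < 2(1+β)`). -/
theorem stmt_2 (α β lam σ : ℝ) (hβ0 : 0 ≤ β) (hβ1 : β < 1)
    (h1 : 0 < α * lam) (h2 : α * lam < 2 * (1 + β))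
    (P : Matrix (Fin 2) (Fin 2) ℝ)
    (hlyap : P = !![0, 1; -β, 1 + β - α * lam] * P * (!![0, 1; -β, 1 + β - α * lam])ᵀ
        + σ ^ 2 • (!![(0 : ℝ); 1] * (!![(0 : ℝ); 1])ᵀ)) :
    P 0 0 = σ ^ 2 * (1 + β) / (α * lam * (1 - β) * (2 * (1 + β) - α * lam)) :=
  stmt_2_general α β lam σ hβ1 h1 h2 P hlyap
end

section
/- For the heavy-ball method with α_hb = 4/(√L+√m)² and β = (√κ-1)²/(√κ+1)², and gradient descent with α_gd = 2/(L+m), where κ = L/m, the ratio of modal variance contributions satisfies Ĵ_hb(λ)/Ĵ_gd(λ) = 1/(1-β²) = (√κ+1)⁴/(8√κ(κ+1)) for every λ ∈ [m, L], independent of λ. -/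
/-!
The heavy-ball step size is `(1 + β)` times the gradient-descent one, so the heavy-ball modal
denominator `α_hb λ (1 - β) (2 (1 + β) - α_hb λ)` is exactly `(1 + β)(1 - β²)` times the
gradient-descent denominator `α_gd λ (2 - α_gd λ)`: the dependence on `λ` cancels in the ratio.
With `s = √κ` one has `1 + β = 2 (s² + 1) / (s + 1)²` and `1 - β² = 8 s (s² + 1) / (s + 1)⁴`.
-/

noncomputable def gdModalVariance (α lam : ℝ) : ℝ :=
  1 / (α * lam * (2 - α * lam))

noncomputable def hbModalVariance (α β lam : ℝ) : ℝ :=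
  (1 + β) / (α * lam * (1 - β) * (2 * (1 + β) - α * lam))

lemma hbModalVariance_one_add_mul {α β : ℝ} (lam : ℝ) (hβ : 1 + β ≠ 0) :
    hbModalVariance ((1 + β) * α) β lam = gdModalVariance α lam / (1 - β ^ 2) := by
  have hden : (1 + β) * α * lam * (1 - β) * (2 * (1 + β) - (1 + β) * α * lam)
      = (1 + β) * ((1 - β ^ 2) * (α * lam * (2 - α * lam))) := by ring
  rw [hbModalVariance, gdModalVariance, hden, div_mul_cancel_left₀ hβ, div_div, one_div,
    mul_comm]

lemma hbModalVariance_div_gdModalVariance {α β lam : ℝ} (hβ : 1 + β ≠ 0)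
    (hgd : gdModalVariance α lam ≠ 0) :
    hbModalVariance ((1 + β) * α) β lam / gdModalVariance α lam = 1 / (1 - β ^ 2) := by
  rw [hbModalVariance_one_add_mul lam hβ, div_div_cancel_left' hgd, one_div]

lemma gdModalVariance_pos {m L lam : ℝ} (hm : 0 < m) (hlam : lam ∈ Set.Icc m L) :
    0 < gdModalVariance (2 / (L + m)) lam := by
  obtain ⟨hml, hlL⟩ := hlam
  have hLm : 0 < L + m := by linarith
  have hstep : 2 / (L + m) * lam < 2 := by
    rw [div_mul_eq_mul_div, div_lt_iff₀ hLm]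
    linarith
  have hstep_pos : 0 < 2 / (L + m) * lam := mul_pos (by positivity) (hm.trans_le hml)
  exact one_div_pos.mpr (mul_pos hstep_pos (by linarith))

lemma one_add_momentum {s : ℝ} (hs : s + 1 ≠ 0) :
    1 + (s - 1) ^ 2 / (s + 1) ^ 2 = 2 * (s ^ 2 + 1) / (s + 1) ^ 2 := by
  field_simp
  ring

lemma one_div_one_sub_momentum_sq {s : ℝ} (hs : s + 1 ≠ 0) :
    1 / (1 - ((s - 1) ^ 2 / (s + 1) ^ 2) ^ 2) = (s + 1) ^ 4 / (8 * s * (s ^ 2 + 1)) := by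
  have h : 1 - ((s - 1) ^ 2 / (s + 1) ^ 2) ^ 2 = 8 * s * (s ^ 2 + 1) / (s + 1) ^ 4 := by
    field_simp
    ring
  rw [h, one_div_div]

lemma hb_stepSize_eq_one_add_momentum_mul {s r : ℝ} (hs : s + 1 ≠ 0) (hr : r ≠ 0) :
    4 / (s * r + r) ^ 2 = (1 + (s - 1) ^ 2 / (s + 1) ^ 2) * (2 / ((s * r) ^ 2 + r ^ 2)) := by
  have hsr : s ^ 2 + 1 ≠ 0 := by positivity
  rw [one_add_momentum hs]
  field_simp
  ring

theorem stmt_4_general (m L lam : ℝ) (hm : 0 < m)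
    (hlam : lam ∈ Set.Icc m L)
    (κ αgd αhb β Jgd Jhb : ℝ)
    (hκ : κ = L / m)
    (hαgd : αgd = 2 / (L + m))
    (hβ : β = (Real.sqrt κ - 1) ^ 2 / (Real.sqrt κ + 1) ^ 2)
    (hαhb : αhb = 4 / (Real.sqrt L + Real.sqrt m) ^ 2)
    (hJgd : Jgd = 1 / (αgd * lam * (2 - αgd * lam)))
    (hJhb : Jhb = (1 + β) / (αhb * lam * (1 - β) * (2 * (1 + β) - αhb * lam))) :
    Jhb / Jgd = 1 / (1 - β ^ 2) ∧
    Jhb / Jgd = (Real.sqrt κ + 1) ^ 4 / (8 * Real.sqrt κ * (κ + 1)) := by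
  have hL : 0 ≤ L := hm.le.trans (hlam.1.trans hlam.2)
  have hκ_nonneg : 0 ≤ κ := hκ ▸ div_nonneg hL hm.le
  set s := Real.sqrt κ
  have hs : s + 1 ≠ 0 := by positivity
  have hsκ : s ^ 2 = κ := Real.sq_sqrt hκ_nonneg
  have hsqrtL : Real.sqrt L = s * Real.sqrt m := by
    rw [← Real.sqrt_mul' _ hm.le, hκ, div_mul_cancel₀ L hm.ne']
  have hLm : L + m = (s * Real.sqrt m) ^ 2 + Real.sqrt m ^ 2 := by
    rw [← hsqrtL, Real.sq_sqrt hL, Real.sq_sqrt hm.le]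
  have hstep : αhb = (1 + β) * αgd := by
    rw [hαhb, hαgd, hsqrtL, hLm, hβ]
    exact hb_stepSize_eq_one_add_momentum_mul hs (Real.sqrt_pos.mpr hm).ne'
  have hβ1 : 1 + β ≠ 0 := by rw [hβ]; positivity
  have hratio : Jhb / Jgd = 1 / (1 - β ^ 2) := by
    rw [hJhb, hJgd, hstep]
    exact hbModalVariance_div_gdModalVariance hβ1 (hαgd ▸ gdModalVariance_pos hm hlam).ne'
  refine ⟨hratio, ?_⟩
  rw [hratio, hβ, one_div_one_sub_momentum_sq hs, hsκ]

/-- The ratio between the modal variance contributions of the heavy-ball method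
(with the rate-optimal parameters) and gradient descent (with `α = 2/(L+m)`)
equals `1/(1-β²) = (√κ+1)⁴/(8√κ(κ+1))` for every `λ ∈ [m, L]`. -/
theorem stmt_4 (m L lam : ℝ) (hm : 0 < m) (hκgt : 1 < L / m)
    (hlam : lam ∈ Set.Icc m L)
    (κ αgd αhb β Jgd Jhb : ℝ)
    (hκ : κ = L / m)
    (hαgd : αgd = 2 / (L + m))
    (hβ : β = (Real.sqrt κ - 1) ^ 2 / (Real.sqrt κ + 1) ^ 2)
    (hαhb : αhb = 4 / (Real.sqrt L + Real.sqrt m) ^ 2)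
    (hJgd : Jgd = 1 / (αgd * lam * (2 - αgd * lam)))
    (hJhb : Jhb = (1 + β) / (αhb * lam * (1 - β) * (2 * (1 + β) - αhb * lam))) :
    Jhb / Jgd = 1 / (1 - β ^ 2) ∧
    Jhb / Jgd = (Real.sqrt κ + 1) ^ 4 / (8 * Real.sqrt κ * (κ + 1)) :=
  stmt_4_general m L lam hm hlam κ αgd αhb β Jgd Jhb hκ hαgd hβ hαhb hJgd hJhb
end

section
/- For Nesterov's method with α = 4/(3L+m) and β = (√(3κ+1)-2)/(√(3κ+1)+2), writing κ̄ = 3κ+1, the modal variance amplification satisfies Ĵ_na(m) = κ̄²(κ̄ - 2√κ̄ + 2)/(32(√κ̄ - 1)³) and Ĵ_na(L) = 9κ̄²(κ̄ + 2√κ̄ - 2)/(32(κ̄-1)(κ̄ - √κ̄ + 1)(2√κ̄ - 1)). -/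
/-! With `s = √κ̄` all parameters become rational in `s`: `β = (s - 2)/(s + 2)`, and the normalized
extreme eigenvalues are `α m = 4/s²` and `α L = 4(s² - 1)/(3s²)`. At both points each of the three
factors of `Ĵ_na` collapses to a short polynomial in `s` over a power of `s`, which leaves a field
identity in `s`. -/

open Real

/-- `Ĵ_na` as a function of the normalized eigenvalue `a = αλ`. -/
noncomputable def nesterovModalAmplification (β a : ℝ) : ℝ :=
  (1 + β * (1 - a)) / (a * (1 - β * (1 - a)) * (2 * (1 + β) - (2 * β + 1) * a))

lemma exists_eq_sq_of_one_lt {k : ℝ} (hk : 1 < k) : ∃ s, 1 < s ∧ k = s ^ 2 :=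
  ⟨√k, lt_sqrt_of_sq_lt (by linarith), (sq_sqrt (by linarith)).symm⟩

lemma nesterovModalAmplification_min {k : ℝ} (hk : 1 < k) :
    nesterovModalAmplification ((√k - 2) / (√k + 2)) (4 / k) =
      k ^ 2 * (k - 2 * √k + 2) / (32 * (√k - 1) ^ 3) := by
  obtain ⟨s, hs, rfl⟩ := exists_eq_sq_of_one_lt hk
  have hs1 : s - 1 ≠ 0 := by linarith
  have hs2 : s + 2 ≠ 0 := by linarith
  rw [sqrt_sq (by linarith)]
  set β := (s - 2) / (s + 2) with hβ
  set a := 4 / s ^ 2 with ha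
  have hnum : 1 + β * (1 - a) = 2 * (s ^ 2 - 2 * s + 2) / s ^ 2 := by
    rw [hβ, ha]; field_simp; ring
  have hden₁ : 1 - β * (1 - a) = 4 * (s - 1) / s ^ 2 := by
    rw [hβ, ha]; field_simp; ring
  have hden₂ : 2 * (1 + β) - (2 * β + 1) * a = 4 * (s - 1) ^ 2 / s ^ 2 := by
    rw [hβ, ha]; field_simp; ring
  rw [nesterovModalAmplification, hnum, hden₁, hden₂, ha]
  field_simp
  ring

lemma nesterovModalAmplification_max {k : ℝ} (hk : 1 < k) :
    nesterovModalAmplification ((√k - 2) / (√k + 2)) (4 * (k - 1) / (3 * k)) =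
      9 * k ^ 2 * (k + 2 * √k - 2) / (32 * (k - 1) * (k - √k + 1) * (2 * √k - 1)) := by
  obtain ⟨s, hs, rfl⟩ := exists_eq_sq_of_one_lt hk
  have hs1 : s ^ 2 - 1 ≠ 0 := by nlinarith
  have hs2 : s + 2 ≠ 0 := by linarith
  have hs3 : s ^ 2 - s + 1 ≠ 0 := by nlinarith
  have hs4 : 2 * s - 1 ≠ 0 := by linarith
  rw [sqrt_sq (by linarith)]
  set β := (s - 2) / (s + 2) with hβ
  set a := 4 * (s ^ 2 - 1) / (3 * s ^ 2) with ha
  have hnum : 1 + β * (1 - a) = 2 * (s ^ 2 + 2 * s - 2) / (3 * s ^ 2) := by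
    rw [hβ, ha]; field_simp; ring
  have hden₁ : 1 - β * (1 - a) = 4 * (s ^ 2 - s + 1) / (3 * s ^ 2) := by
    rw [hβ, ha]; field_simp; ring
  have hden₂ : 2 * (1 + β) - (2 * β + 1) * a = 4 * (2 * s - 1) / (3 * s ^ 2) := by
    rw [hβ, ha]; field_simp; ring
  rw [nesterovModalAmplification, hnum, hden₁, hden₂, ha]
  field_simp
  ring

lemma four_div_three_mul_add_mul_left {m L : ℝ} (hm : m ≠ 0) :
    4 / (3 * L + m) * m = 4 / (3 * (L / m) + 1) := by
  rw [show 3 * (L / m) + 1 = (3 * L + m) / m by field_simp, div_div_eq_mul_div, div_mul_eq_mul_div]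

lemma four_div_three_mul_add_mul_right {m L : ℝ} (hm : m ≠ 0) :
    4 / (3 * L + m) * L = 4 * (3 * (L / m) + 1 - 1) / (3 * (3 * (L / m) + 1)) := by
  rw [add_sub_cancel_right, show 3 * (L / m) + 1 = (3 * L + m) / m by field_simp]
  field_simp

theorem stmt_6_general (m L : ℝ) (hκgt : 1 < L / m)
    (κ κb α β : ℝ) (J : ℝ → ℝ)
    (hκ : κ = L / m) (hκb : κb = 3 * κ + 1)
    (hα : α = 4 / (3 * L + m))
    (hβ : β = (Real.sqrt κb - 2) / (Real.sqrt κb + 2))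
    (hJ : ∀ lam, J lam = (1 + β * (1 - α * lam)) /
      (α * lam * (1 - β * (1 - α * lam)) * (2 * (1 + β) - (2 * β + 1) * (α * lam)))) :
    J m = κb ^ 2 * (κb - 2 * Real.sqrt κb + 2) / (32 * (Real.sqrt κb - 1) ^ 3) ∧
    J L = 9 * κb ^ 2 * (κb + 2 * Real.sqrt κb - 2) /
      (32 * (κb - 1) * (κb - Real.sqrt κb + 1) * (2 * Real.sqrt κb - 1)) := by
  have hm : m ≠ 0 := by rintro rfl; simp only [div_zero] at hκgt; linarith
  have hk : 1 < κb := by rw [hκb, hκ]; linarith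
  have hαm : α * m = 4 / κb := by rw [hα, hκb, hκ]; exact four_div_three_mul_add_mul_left hm
  have hαL : α * L = 4 * (κb - 1) / (3 * κb) := by
    rw [hα, hκb, hκ]; exact four_div_three_mul_add_mul_right hm
  simp only [hJ, hαm, hαL, hβ]
  exact ⟨nesterovModalAmplification_min hk, nesterovModalAmplification_max hk⟩

/-- For Nesterov's method with the rate-optimal parameters `α = 4/(3L+m)` and
`β = (√(3κ+1)-2)/(√(3κ+1)+2)`, writing `κ̄ = 3κ+1`, the modal variance
amplification satisfies the stated closed-form expressions at `λ = m` and
`λ = L`. -/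
theorem stmt_6 (m L : ℝ) (hm : 0 < m) (hκgt : 1 < L / m)
    (κ κb α β : ℝ) (J : ℝ → ℝ)
    (hκ : κ = L / m) (hκb : κb = 3 * κ + 1)
    (hα : α = 4 / (3 * L + m))
    (hβ : β = (Real.sqrt κb - 2) / (Real.sqrt κb + 2))
    (hJ : ∀ lam, J lam = (1 + β * (1 - α * lam)) /
      (α * lam * (1 - β * (1 - α * lam)) * (2 * (1 + β) - (2 * β + 1) * (α * lam)))) :
    J m = κb ^ 2 * (κb - 2 * Real.sqrt κb + 2) / (32 * (Real.sqrt κb - 1) ^ 3) ∧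
    J L = 9 * κb ^ 2 * (κb + 2 * Real.sqrt κb - 2) /
      (32 * (κb - 1) * (κb - Real.sqrt κb + 1) * (2 * Real.sqrt κb - 1)) :=
  stmt_6_general m L hκgt κ κb α β J hκ hκb hα hβ hJ
end

section
/- Suppose real numbers satisfy a_L ≤ a_i ≤ a_m, g(λ_i) = g for all i (constant), with a_L ≤ a_m. Then for any n eigenvalues λ_1 = L, λ_n = m, and λ_i ∈ [m,L] for 2 ≤ i ≤ n-1, the ratio (Σ_i Ĵ_na(λ_i))/(Σ_i Ĵ_gd(λ_i)) is bounded below by (Ĵ_na(m) + (n-1)Ĵ_na(L))/(Ĵ_gd(m) + (n-1)Ĵ_gd(L)) and above by (Ĵ_na(L) + (n-1)Ĵ_na(m))/(Ĵ_gd(L) + (n-1)Ĵ_gd(m)), given that Ĵ_gd(λ) is constant across λ ∈ {m,L} with Ĵ_gd(λ_i) ≤ Ĵ_gd(m) for all i, the ratio Ĵ_na(λ)/Ĵ_gd(λ) is decreasing in λ, and Ĵ_na(m) ≥ Ĵ_na(L). -/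
/-!
Write `g` for the common value `Ĵ_gd(m) = Ĵ_gd(L)`, which bounds every `Ĵ_gd(λᵢ)`. Since the ratio
`Ĵ_na/Ĵ_gd` is nonincreasing, every `Ĵ_na(λᵢ)/Ĵ_gd(λᵢ)` lies between `Ĵ_na(L)/g` and `Ĵ_na(m)/g`.
For the lower bound, `g · J_na - Ĵ_na(L) · J_gd` is a sum of nonnegative terms, one of which
(at `λₙ = m`) equals `g (Ĵ_na(m) - Ĵ_na(L))`; combined with `J_gd ≤ n g` this is exactly the claim.
The upper bound is the lower bound applied to `-Ĵ_na`, with `λ₁ = L` as the pinned eigenvalue.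
-/

open Finset

theorem div_le_sum_div_sum {ι : Type*} [Fintype ι] {a b : ι → ℝ} {g p q : ℝ}
    (hb : ∀ i, 0 < b i) (hbg : ∀ i, b i ≤ g) (hpq : p ≤ q)
    (hratio : ∀ i, p / g ≤ a i / b i) (j : ι) (haj : a j = q) (hbj : b j = g) :
    (q + (Fintype.card ι - 1) * p) / (Fintype.card ι * g) ≤ (∑ i, a i) / ∑ i, b i := by
  have hg : 0 < g := hbj ▸ hb j
  have hB : 0 < ∑ i, b i := sum_pos (fun i _ => hb i) ⟨j, mem_univ j⟩
  have hBle : ∑ i, b i ≤ Fintype.card ι * g := by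
    simpa using sum_le_card_nsmul univ b g fun i _ => hbg i
  have hterm : ∀ i, 0 ≤ a i * g - p * b i := fun i => by
    have := (div_le_div_iff₀ hg (hb i)).mp (hratio i)
    linarith
  have hpinned : g * (q - p) ≤ (∑ i, a i) * g - p * ∑ i, b i := calc
    g * (q - p) = a j * g - p * b j := by rw [haj, hbj]; ring
    _ ≤ ∑ i, (a i * g - p * b i) := single_le_sum (fun i _ => hterm i) (mem_univ j)
    _ = (∑ i, a i) * g - p * ∑ i, b i := by rw [sum_sub_distrib, sum_mul, mul_sum]
  have hN : (0 : ℝ) < Fintype.card ι := Nat.cast_pos.2 (Fintype.card_pos_iff.2 ⟨j⟩)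
  rw [div_le_div_iff₀ (mul_pos hN hg) hB]
  linarith [mul_le_mul_of_nonneg_left hpinned hN.le,
    mul_le_mul_of_nonneg_left hBle (sub_nonneg.2 hpq)]

theorem sum_div_sum_le_div {ι : Type*} [Fintype ι] {a b : ι → ℝ} {g p q : ℝ}
    (hb : ∀ i, 0 < b i) (hbg : ∀ i, b i ≤ g) (hpq : p ≤ q)
    (hratio : ∀ i, a i / b i ≤ q / g) (j : ι) (haj : a j = p) (hbj : b j = g) :
    (∑ i, a i) / (∑ i, b i) ≤ (p + (Fintype.card ι - 1) * q) / (Fintype.card ι * g) := by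
  have := div_le_sum_div_sum (a := -a) (p := -q) (q := -p) hb hbg (neg_le_neg hpq)
    (fun i => by rw [Pi.neg_apply, neg_div, neg_div, neg_le_neg_iff]; exact hratio i) j
    (by rw [Pi.neg_apply, haj]) hbj
  rw [← neg_le_neg_iff]
  convert this using 1
  · ring
  · simp only [Pi.neg_apply, sum_neg_distrib, neg_div]

/-- Bounds on the ratio `J_na/J_gd = (Σᵢ Ĵ_na(λᵢ))/(Σᵢ Ĵ_gd(λᵢ))` when:
(i) `Ĵ_gd(m) = Ĵ_gd(L)` and `Ĵ_gd(λᵢ) ≤ Ĵ_gd(m)` for all i,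
(ii) `λ ↦ Ĵ_na(λ)/Ĵ_gd(λ)` is nonincreasing on `[m,L]`,
(iii) `Ĵ_na(m) ≥ Ĵ_na(L)`,
with `λ₁ = L`, `λₙ = m`, all `λᵢ ∈ [m,L]`, and both functions positive. -/
theorem stmt_9 (n : ℕ) (hn : 2 ≤ n) (m L : ℝ) (hmL : m ≤ L)
    (Jna Jgd : ℝ → ℝ) (lam : Fin n → ℝ)
    (hmem : ∀ i, lam i ∈ Set.Icc m L)
    (hfirst : lam ⟨0, by omega⟩ = L) (hlast : lam ⟨n - 1, by omega⟩ = m)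
    (hpos : ∀ x ∈ Set.Icc m L, 0 < Jgd x ∧ 0 < Jna x)
    (hgd_eq : Jgd m = Jgd L)
    (hgd_max : ∀ i, Jgd (lam i) ≤ Jgd m)
    (hratio : ∀ x ∈ Set.Icc m L, ∀ y ∈ Set.Icc m L, x ≤ y →
      Jna y / Jgd y ≤ Jna x / Jgd x)
    (hna : Jna L ≤ Jna m) :
    (Jna m + ((n : ℝ) - 1) * Jna L) / (Jgd m + ((n : ℝ) - 1) * Jgd L) ≤
      (∑ i, Jna (lam i)) / (∑ i, Jgd (lam i)) ∧
    (∑ i, Jna (lam i)) / (∑ i, Jgd (lam i)) ≤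
      (Jna L + ((n : ℝ) - 1) * Jna m) / (Jgd L + ((n : ℝ) - 1) * Jgd m) := by
  have hmm : m ∈ Set.Icc m L := ⟨le_rfl, hmL⟩
  have hLL : L ∈ Set.Icc m L := ⟨hmL, le_rfl⟩
  have hgd_pos : ∀ i, 0 < Jgd (lam i) := fun i => (hpos _ (hmem i)).1
  have hlower := div_le_sum_div_sum hgd_pos hgd_max hna
    (fun i => hgd_eq ▸ hratio _ (hmem i) L hLL (hmem i).2) ⟨n - 1, by omega⟩
    (congrArg Jna hlast) (congrArg Jgd hlast)
  have hupper := sum_div_sum_le_div hgd_pos hgd_max hna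
    (fun i => hratio m hmm _ (hmem i) (hmem i).1) ⟨0, by omega⟩
    (congrArg Jna hfirst) (by rw [hfirst, hgd_eq])
  rw [Fintype.card_fin] at hlower hupper
  rw [← hgd_eq, ← one_add_mul, add_sub_cancel]
  exact ⟨hlower, hupper⟩
end

section
/- For gradient descent with α = 2/(L+m) on an n-dimensional strongly convex quadratic with all Hessian eigenvalues in [m,L] and extreme eigenvalues m and L, the variance amplification J_gd = Σ_i Ĵ_gd(λ_i) (σ=1) satisfies (κ-1)²/(2κ) + n ≤ J_gd ≤ n(κ+1)²/(4κ), where κ = L/m. -/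
/-!
With `α = 2/(L+m)` one has `α x (2 - α x) = 4x(L+m-x)/(L+m)²`, so
`Ĵ_gd(x) = (L+m)²/(4x(L+m-x))`. By AM–GM `4x(L+m-x) ≤ (L+m)²`, giving `Ĵ_gd ≥ 1`, and for
`x ∈ [m,L]` the product `(x-m)(L-x) ≥ 0` gives `x(L+m-x) ≥ Lm`, so `Ĵ_gd ≤ (κ+1)²/(4κ)`, with
equality at both endpoints. For the lower estimate, the two extreme eigenvalues each
contribute `(κ+1)²/(4κ) = 1 + (κ-1)²/(4κ)` and every other one at least `1`.
-/

open Finset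

/-- The paper's `Ĵ_gd(λ)` at `σ = 1`. -/
noncomputable def gdVarAmp (α x : ℝ) : ℝ := 1 / (α * x * (2 - α * x))

lemma gdVarAmp_two_div_add (L m x : ℝ) :
    gdVarAmp (2 / (L + m)) x = (L + m) ^ 2 / (4 * x * (L + m - x)) := by
  rcases eq_or_ne (L + m) 0 with h | h
  · simp [gdVarAmp, h]
  · rw [gdVarAmp, one_div, ← inv_div]
    field_simp
    ring

lemma gdVarAmp_two_div_add_left (L m : ℝ) :
    gdVarAmp (2 / (L + m)) L = (L / m + 1) ^ 2 / (4 * (L / m)) := by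
  rw [gdVarAmp_two_div_add, add_sub_cancel_left]
  rcases eq_or_ne m 0 with rfl | hm
  · simp
  rcases eq_or_ne L 0 with rfl | hL
  · simp
  field_simp

lemma gdVarAmp_two_div_add_right (L m : ℝ) :
    gdVarAmp (2 / (L + m)) m = (L / m + 1) ^ 2 / (4 * (L / m)) := by
  rw [← gdVarAmp_two_div_add_left, gdVarAmp_two_div_add, gdVarAmp_two_div_add]
  ring_nf

lemma one_le_gdVarAmp_two_div_add {L m x : ℝ} (hx : 0 < x) (hxLm : x < L + m) :
    1 ≤ gdVarAmp (2 / (L + m)) x := by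
  rw [gdVarAmp_two_div_add, one_le_div (by nlinarith)]
  nlinarith [sq_nonneg (L + m - 2 * x)]

lemma gdVarAmp_two_div_add_le {L m x : ℝ} (hm : 0 < m) (hx : x ∈ Set.Icc m L) :
    gdVarAmp (2 / (L + m)) x ≤ (L / m + 1) ^ 2 / (4 * (L / m)) := by
  obtain ⟨hmx, hxL⟩ := hx
  rw [← gdVarAmp_two_div_add_right, gdVarAmp_two_div_add, gdVarAmp_two_div_add,
    add_sub_cancel_right]
  apply div_le_div_of_nonneg_left (sq_nonneg _) (by nlinarith)
  nlinarith [mul_nonneg (sub_nonneg.2 hmx) (sub_nonneg.2 hxL)]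

lemma card_add_sub_one_add_sub_one_le_sum {ι : Type*} [Fintype ι] {f : ι → ℝ}
    (hf : ∀ k, 1 ≤ f k) {i j : ι} (hij : i ≠ j) :
    Fintype.card ι + (f i - 1) + (f j - 1) ≤ ∑ k, f k := by
  have hsum : ∑ k, f k = Fintype.card ι + ∑ k, (f k - 1) := by
    simp only [sum_sub_distrib, sum_const, card_univ, nsmul_eq_mul, mul_one]
    ring
  have hij_le := add_le_sum (fun k _ ↦ sub_nonneg.2 (hf k)) (mem_univ i) (mem_univ j) hij
  linarith

/-- Tight bounds on the variance amplification of gradient descent with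
`α = 2/(L+m)`: for Hessian eigenvalues `λ₁ = L ≥ ... ≥ λₙ = m > 0` in `[m,L]`,
`(κ-1)²/(2κ) + n ≤ J_gd = Σᵢ Ĵ_gd(λᵢ) ≤ n(κ+1)²/(4κ)` with `κ = L/m`, `σ = 1`. -/
theorem stmt_10 (n : ℕ) (hn : 0 < n) (m L : ℝ) (hm : 0 < m) (hmL : m ≤ L)
    (lam : Fin n → ℝ) (hmem : ∀ i, lam i ∈ Set.Icc m L)
    (hfirst : lam ⟨0, hn⟩ = L) (hlast : lam ⟨n - 1, by omega⟩ = m)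
    (κ α : ℝ) (hκ : κ = L / m) (hα : α = 2 / (L + m)) :
    (κ - 1) ^ 2 / (2 * κ) + n ≤ ∑ i, 1 / (α * lam i * (2 - α * lam i)) ∧
    ∑ i, 1 / (α * lam i * (2 - α * lam i)) ≤ n * (κ + 1) ^ 2 / (4 * κ) := by
  subst hκ hα
  change _ ≤ ∑ i, gdVarAmp _ (lam i) ∧ ∑ i, gdVarAmp _ (lam i) ≤ _
  have hone : ∀ i, 1 ≤ gdVarAmp (2 / (L + m)) (lam i) := fun i ↦
    one_le_gdVarAmp_two_div_add (hm.trans_le (hmem i).1) (by linarith [(hmem i).2])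
  have hL : 0 < L := hm.trans_le hmL
  refine ⟨?_, ?_⟩
  · by_cases hends : (⟨0, hn⟩ : Fin n) = ⟨n - 1, by omega⟩
    · have hLm : L / m = 1 := by
        rw [← hfirst, hends, hlast, div_self hm.ne']
      have hcard := card_nsmul_le_sum univ _ 1 fun i _ ↦ hone i
      rw [hLm]
      simpa using hcard
    · have hends_sum := card_add_sub_one_add_sub_one_le_sum hone hends
      rw [hfirst, hlast, gdVarAmp_two_div_add_left, gdVarAmp_two_div_add_right,
        Fintype.card_fin] at hends_sum
      have hsq : (L / m - 1) ^ 2 / (2 * (L / m)) = 2 * ((L / m + 1) ^ 2 / (4 * (L / m)) - 1) := by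
        field_simp
        ring
      linarith
  · calc ∑ i, gdVarAmp (2 / (L + m)) (lam i)
        ≤ ∑ _i : Fin n, (L / m + 1) ^ 2 / (4 * (L / m)) :=
          sum_le_sum fun i _ ↦ gdVarAmp_two_div_add_le hm (hmem i)
      _ = n * (L / m + 1) ^ 2 / (4 * (L / m)) := by
          rw [sum_const, card_univ, Fintype.card_fin, nsmul_eq_mul, mul_div_assoc]
end

section
/- Suppose there exist X ⪰ 0 and λ ≥ 0 such that [[A^T X A - X + C_z^T C_z, A^T X B_u],[B_u^T X A, B_u^T X B_u]] + λ [[C_y^T,0],[0,I]] Π [[C_y,0],[0,I]] ⪯ 0, and the nonlinearity satisfies [y;u]^T Π [y;u] ≥ 0 pointwise. Then the stochastic system ψ^{t+1} = Aψ^t + σB_w w^t + B_u Δ(C_y ψ^t), z^t = C_z ψ^t, driven by zero-mean white noise w^t with identity covariance, satisfies limsup_{T→∞} (1/T) Σ_{t=1}^T E(‖z^t‖²) ≤ σ² trace(B_w^T X B_w). -/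
open Matrix MeasureTheory ProbabilityTheory Filter

/-!
`V ψ = ψᵀ X ψ` is a storage function. Testing the LMI against `(ψ, Δ (C_y ψ))` and using `λ ≥ 0`
with the quadratic constraint gives the pointwise dissipation inequality
`‖C_z ψ‖² + V (A ψ + B_u Δ (C_y ψ)) ≤ V ψ`. The noise enters additively, independently of the state
and with mean zero, so in expectation it only adds `σ² E[wᵀ B_wᵀ X B_w w] = σ² tr (B_wᵀ X B_w)`:
`E‖z^t‖² + E V(ψ^{t+1}) ≤ E V(ψ^t) + σ² tr (B_wᵀ X B_w)`. Telescoping and `V ≥ 0` bound the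
Cesàro averages by `E V(ψ^1) / T + σ² tr (B_wᵀ X B_w)`.
-/

theorem Matrix.PosSemidef.exists_eq_transpose_mul_self {n : Type*} [Fintype n] [DecidableEq n]
    {X : Matrix n n ℝ} (hX : X.PosSemidef) : ∃ M : Matrix n n ℝ, X = Mᵀ * M := by
  open scoped MatrixOrder in
  obtain ⟨M, hM, -, rfl⟩ := CFC.exists_sqrt_of_isSelfAdjoint_of_quasispectrumRestricts
    hX.isHermitian (QuasispectrumRestricts.nnreal_of_nonneg hX.nonneg)
  exact ⟨M, by rw [← conjTranspose_eq_transpose_of_trivial, ← star_eq_conjTranspose, hM.star_eq]⟩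

theorem Matrix.PosSemidef.dotProduct_mulVec_nonneg' {n : Type*} [Fintype n] {X : Matrix n n ℝ}
    (hX : X.PosSemidef) (v : n → ℝ) : 0 ≤ v ⬝ᵥ (X *ᵥ v) := by
  simpa using hX.dotProduct_mulVec_nonneg v

theorem Matrix.dotProduct_mulVec_transpose_mul_self {m n : Type*} [Fintype m] [Fintype n]
    (M : Matrix m n ℝ) (v : n → ℝ) : v ⬝ᵥ ((Mᵀ * M) *ᵥ v) = (M *ᵥ v) ⬝ᵥ (M *ᵥ v) := by
  rw [← mulVec_mulVec, dotProduct_mulVec, vecMul_transpose]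

theorem dotProduct_self_eq_sum_sq {n : Type*} [Fintype n] (v : n → ℝ) :
    v ⬝ᵥ v = ∑ i, v i ^ 2 := by
  simp only [dotProduct, sq]

section LMI

variable {ι υ ζ κ : Type*} [Fintype ι] [Fintype υ] [Fintype ζ] [Fintype κ]

theorem output_energy_add_storage_le_of_lmi [DecidableEq υ] {lamb : ℝ} (hlamb : 0 ≤ lamb)
    {A X : Matrix ι ι ℝ} {Bu : Matrix ι υ ℝ} {Cz : Matrix ζ ι ℝ} {Cy : Matrix κ ι ℝ}
    {P : Matrix (κ ⊕ υ) (κ ⊕ υ) ℝ}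
    (hLMI : (-(fromBlocks (Aᵀ * X * A - X + Czᵀ * Cz) (Aᵀ * X * Bu) (Buᵀ * X * A) (Buᵀ * X * Bu)
        + lamb • (fromBlocks Cyᵀ 0 0 (1 : Matrix υ υ ℝ) * P *
          fromBlocks Cy 0 0 (1 : Matrix υ υ ℝ)))).PosSemidef)
    (p : ι → ℝ) (u : υ → ℝ)
    (hP : 0 ≤ Sum.elim (Cy *ᵥ p) u ⬝ᵥ (P *ᵥ Sum.elim (Cy *ᵥ p) u)) :
    (Cz *ᵥ p) ⬝ᵥ (Cz *ᵥ p) + (A *ᵥ p + Bu *ᵥ u) ⬝ᵥ (X *ᵥ (A *ᵥ p + Bu *ᵥ u))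
      ≤ p ⬝ᵥ (X *ᵥ p) := by
  have hE : fromBlocks Cy 0 0 (1 : Matrix υ υ ℝ) *ᵥ Sum.elim p u = Sum.elim (Cy *ᵥ p) u := by
    simp [fromBlocks_mulVec]
  have hsupply : Sum.elim p u ⬝ᵥ ((fromBlocks Cyᵀ 0 0 (1 : Matrix υ υ ℝ) * P *
      fromBlocks Cy 0 0 (1 : Matrix υ υ ℝ)) *ᵥ Sum.elim p u)
      = Sum.elim (Cy *ᵥ p) u ⬝ᵥ (P *ᵥ Sum.elim (Cy *ᵥ p) u) := by
    rw [← hE, ← mulVec_mulVec, ← mulVec_mulVec, dotProduct_mulVec, ← transpose_transpose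
      (fromBlocks Cyᵀ _ _ _), vecMul_transpose, fromBlocks_transpose]
    simp
  have hstorage : Sum.elim p u ⬝ᵥ (fromBlocks (Aᵀ * X * A - X + Czᵀ * Cz) (Aᵀ * X * Bu)
      (Buᵀ * X * A) (Buᵀ * X * Bu) *ᵥ Sum.elim p u)
      = (A *ᵥ p + Bu *ᵥ u) ⬝ᵥ (X *ᵥ (A *ᵥ p + Bu *ᵥ u)) - p ⬝ᵥ (X *ᵥ p)
        + (Cz *ᵥ p) ⬝ᵥ (Cz *ᵥ p) := by
    simp only [fromBlocks_mulVec, Sum.elim_comp_inl, Sum.elim_comp_inr,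
      sumElim_dotProduct_sumElim, add_mulVec, sub_mulVec, mulVec_add, dotProduct_add,
      add_dotProduct, add_vecMul, dotProduct_sub, ← mulVec_mulVec, dotProduct_mulVec,
      vecMul_transpose]
    ring
  have h := hLMI.dotProduct_mulVec_nonneg' (Sum.elim p u)
  rw [neg_mulVec, dotProduct_neg, add_mulVec, dotProduct_add, smul_mulVec, dotProduct_smul,
    smul_eq_mul, hsupply, hstorage] at h
  nlinarith [mul_nonneg hlamb hP]

end LMI

section RandomVector

variable {Ω ι κ : Type*} [MeasurableSpace Ω] {μ : Measure Ω} [Fintype ι]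

theorem memLp_two_apply_of_integrable_sum_sq {f : Ω → ι → ℝ} (hf : Measurable f)
    (h : Integrable (fun ω => ∑ i, f ω i ^ 2) μ) (i : ι) : MemLp (fun ω => f ω i) 2 μ := by
  have hfi : Measurable fun ω => f ω i := (measurable_pi_apply i).comp hf
  refine (memLp_two_iff_integrable_sq hfi.aestronglyMeasurable).2 <|
    h.mono' (hfi.pow_const 2).aestronglyMeasurable <| ae_of_all _ fun ω => ?_
  rw [Real.norm_of_nonneg (sq_nonneg _)]
  exact Finset.single_le_sum (fun j _ => sq_nonneg (f ω j)) (Finset.mem_univ i)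

theorem memLp_two_mulVec_apply (M : Matrix κ ι ℝ) {f : Ω → ι → ℝ}
    (hf : ∀ i, MemLp (fun ω => f ω i) 2 μ) (k : κ) : MemLp (fun ω => (M *ᵥ f ω) k) 2 μ := by
  simp only [mulVec, dotProduct]
  exact memLp_finsetSum _ fun i _ => (hf i).const_mul (M k i)

theorem integrable_dotProduct {f g : Ω → ι → ℝ} (hf : ∀ i, MemLp (fun ω => f ω i) 2 μ)
    (hg : ∀ i, MemLp (fun ω => g ω i) 2 μ) : Integrable (fun ω => f ω ⬝ᵥ g ω) μ :=
  integrable_finsetSum _ fun i _ => (hf i).integrable_mul (hg i)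

theorem integral_mulVec_apply_eq_zero [IsFiniteMeasure μ] (M : Matrix κ ι ℝ) {f : Ω → ι → ℝ}
    (hf : ∀ i, MemLp (fun ω => f ω i) 2 μ) (hmean : ∀ i, ∫ ω, f ω i ∂μ = 0) (k : κ) :
    ∫ ω, (M *ᵥ f ω) k ∂μ = 0 := by
  simp only [mulVec, dotProduct]
  rw [integral_finsetSum _ fun i _ => ((hf i).integrable one_le_two).const_mul _]
  simp [integral_const_mul, hmean]

theorem integral_dotProduct_eq_zero_of_indepFun {f g : Ω → ι → ℝ}
    (hf : ∀ i, MemLp (fun ω => f ω i) 2 μ) (hg : ∀ i, MemLp (fun ω => g ω i) 2 μ)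
    (hfg : IndepFun f g μ) (hmean : ∀ i, ∫ ω, g ω i ∂μ = 0) :
    ∫ ω, f ω ⬝ᵥ g ω ∂μ = 0 := by
  simp only [dotProduct]
  rw [integral_finsetSum (f := fun i ω => f ω i * g ω i) _ fun i _ =>
    (hf i).integrable_mul (hg i)]
  refine Finset.sum_eq_zero fun i _ => ?_
  have hi : IndepFun (fun ω => f ω i) (fun ω => g ω i) μ :=
    hfg.comp (measurable_pi_apply i) (measurable_pi_apply i)
  rw [hi.integral_fun_mul_eq_mul_integral (hf i).1 (hg i).1, hmean i, mul_zero]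

theorem integral_dotProduct_mulVec_eq_trace [DecidableEq ι] {w : Ω → ι → ℝ}
    (hw : ∀ i, MemLp (fun ω => w ω i) 2 μ)
    (hcov : ∀ i j, ∫ ω, w ω i * w ω j ∂μ = if i = j then 1 else 0) (K : Matrix ι ι ℝ) :
    ∫ ω, w ω ⬝ᵥ (K *ᵥ w ω) ∂μ = K.trace := by
  have hexpand : ∀ ω, w ω ⬝ᵥ (K *ᵥ w ω) = ∑ i, ∑ j, K i j * (w ω i * w ω j) := fun ω => by
    simp only [dotProduct, mulVec, Finset.mul_sum]
    exact Finset.sum_congr rfl fun i _ => Finset.sum_congr rfl fun j _ => by ring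
  have hint : ∀ i j, Integrable (fun ω => K i j * (w ω i * w ω j)) μ := fun i j =>
    ((hw i).integrable_mul (hw j)).const_mul _
  simp_rw [hexpand]
  rw [integral_finsetSum _ fun i _ => integrable_finsetSum _ fun j _ => hint i j]
  simp_rw [integral_finsetSum _ fun j _ => hint _ j, integral_const_mul, hcov]
  simp [trace]

theorem integral_quadForm_add_noise [IsFiniteMeasure μ] [Fintype κ] [DecidableEq κ]
    {X : Matrix ι ι ℝ} (hX : X.PosSemidef) (B : Matrix ι κ ℝ) (σ : ℝ)
    {s : Ω → ι → ℝ} {w : Ω → κ → ℝ}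
    (hs : Measurable s) (hsX : Integrable (fun ω => s ω ⬝ᵥ (X *ᵥ s ω)) μ)
    (hw : ∀ j, MemLp (fun ω => w ω j) 2 μ) (hmean : ∀ j, ∫ ω, w ω j ∂μ = 0)
    (hcov : ∀ i j, ∫ ω, w ω i * w ω j ∂μ = if i = j then 1 else 0) (hsw : IndepFun s w μ) :
    ∫ ω, (s ω + σ • (B *ᵥ w ω)) ⬝ᵥ (X *ᵥ (s ω + σ • (B *ᵥ w ω))) ∂μ
      = ∫ ω, s ω ⬝ᵥ (X *ᵥ s ω) ∂μ + σ ^ 2 * (Bᵀ * X * B).trace := by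
  classical
  -- `s` need not be square-integrable, but `M *ᵥ s` is, which the cross term needs.
  obtain ⟨M, rfl⟩ := hX.exists_eq_transpose_mul_self
  set g : Ω → ι → ℝ := fun ω => M *ᵥ s ω
  set h : Ω → ι → ℝ := fun ω => (M * B) *ᵥ w ω
  have hexpand : ∀ ω, (s ω + σ • (B *ᵥ w ω)) ⬝ᵥ ((Mᵀ * M) *ᵥ (s ω + σ • (B *ᵥ w ω)))
      = g ω ⬝ᵥ g ω + 2 * σ * (g ω ⬝ᵥ h ω) + σ ^ 2 * (h ω ⬝ᵥ h ω) := fun ω => by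
    rw [dotProduct_mulVec_transpose_mul_self, mulVec_add, mulVec_smul, mulVec_mulVec]
    simp only [dotProduct_add, add_dotProduct, dotProduct_smul, smul_dotProduct, smul_eq_mul,
      dotProduct_comm ((M * B) *ᵥ w ω) (M *ᵥ s ω), g, h]
    ring
  have hgg : ∀ ω, g ω ⬝ᵥ g ω = s ω ⬝ᵥ ((Mᵀ * M) *ᵥ s ω) := fun ω =>
    (dotProduct_mulVec_transpose_mul_self M (s ω)).symm
  have hhh : ∀ ω, h ω ⬝ᵥ h ω = w ω ⬝ᵥ ((Bᵀ * (Mᵀ * M) * B) *ᵥ w ω) := fun ω => by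
    rw [← dotProduct_mulVec_transpose_mul_self]
    simp only [transpose_mul, Matrix.mul_assoc]
  have hg : ∀ i, MemLp (fun ω => g ω i) 2 μ := memLp_two_apply_of_integrable_sum_sq
    (by fun_prop) (by simpa only [← dotProduct_self_eq_sum_sq, hgg] using hsX)
  have hh : ∀ i, MemLp (fun ω => h ω i) 2 μ := memLp_two_mulVec_apply (M * B) hw
  have hcross : ∫ ω, g ω ⬝ᵥ h ω ∂μ = 0 :=
    integral_dotProduct_eq_zero_of_indepFun hg hh
      (hsw.comp (φ := (M *ᵥ ·)) (ψ := ((M * B) *ᵥ ·)) (by fun_prop) (by fun_prop))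
      (integral_mulVec_apply_eq_zero (M * B) hw hmean)
  simp_rw [hexpand]
  have hgg_int := integrable_dotProduct hg hg
  have hgh_int := (integrable_dotProduct hg hh).const_mul (2 * σ)
  rw [integral_add (f := fun ω => g ω ⬝ᵥ g ω + 2 * σ * (g ω ⬝ᵥ h ω)) (hgg_int.add hgh_int)
      ((integrable_dotProduct hh hh).const_mul _), integral_add hgg_int hgh_int,
    integral_const_mul, integral_const_mul, hcross]
  simp_rw [hgg, hhh]
  rw [integral_dotProduct_mulVec_eq_trace hw hcov]
  ring

theorem integral_add_integral_quadForm_le [IsFiniteMeasure μ] [Fintype κ] [DecidableEq κ]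
    {X : Matrix ι ι ℝ} (hX : X.PosSemidef) (B : Matrix ι κ ℝ) (σ : ℝ)
    {F : (ι → ℝ) → ι → ℝ} (hF : Measurable F) {q : (ι → ℝ) → ℝ} (hq : Measurable q)
    (hq_nonneg : ∀ x, 0 ≤ q x) (hdiss : ∀ x, q x + F x ⬝ᵥ (X *ᵥ F x) ≤ x ⬝ᵥ (X *ᵥ x))
    {p : Ω → ι → ℝ} (hp : Measurable p) (hpX : Integrable (fun ω => p ω ⬝ᵥ (X *ᵥ p ω)) μ)
    {w : Ω → κ → ℝ} (hw : ∀ j, MemLp (fun ω => w ω j) 2 μ) (hmean : ∀ j, ∫ ω, w ω j ∂μ = 0)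
    (hcov : ∀ i j, ∫ ω, w ω i * w ω j ∂μ = if i = j then 1 else 0) (hpw : IndepFun p w μ) :
    ∫ ω, q (p ω) ∂μ + ∫ ω, (F (p ω) + σ • (B *ᵥ w ω)) ⬝ᵥ (X *ᵥ (F (p ω) + σ • (B *ᵥ w ω))) ∂μ
      ≤ ∫ ω, p ω ⬝ᵥ (X *ᵥ p ω) ∂μ + σ ^ 2 * (Bᵀ * X * B).trace := by
  have hFX : ∀ x, 0 ≤ F x ⬝ᵥ (X *ᵥ F x) := fun x => hX.dotProduct_mulVec_nonneg' (F x)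
  have hq_int : Integrable (fun ω => q (p ω)) μ :=
    integrable_of_le_of_le (hq.comp hp).aestronglyMeasurable (ae_of_all _ fun ω => hq_nonneg _)
      (ae_of_all _ fun ω => by linarith [hdiss (p ω), hFX (p ω)]) (integrable_zero _ _ _) hpX
  have hFX_int : Integrable (fun ω => F (p ω) ⬝ᵥ (X *ᵥ F (p ω))) μ :=
    integrable_of_le_of_le
      (((by fun_prop : Continuous fun x : ι → ℝ => x ⬝ᵥ (X *ᵥ x)).measurable.comp
        (hF.comp hp)).aestronglyMeasurable) (ae_of_all _ fun ω => hFX _)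
      (ae_of_all _ fun ω => by linarith [hdiss (p ω), hq_nonneg (p ω)]) (integrable_zero _ _ _) hpX
  rw [integral_quadForm_add_noise (s := fun ω => F (p ω)) hX B σ (hF.comp hp) hFX_int hw hmean
    hcov (hpw.comp hF measurable_id), ← add_assoc, ← integral_add hq_int hFX_int]
  exact add_le_add_left (integral_mono (hq_int.add hFX_int) hpX fun ω => hdiss (p ω)) _

end RandomVector

theorem limsup_average_le_of_add_succ_le {c V : ℕ → ℝ} {K : ℝ} (hc : ∀ t, 0 ≤ c t)
    (hV : ∀ t, 0 ≤ V t) (hstep : ∀ t, c t + V (t + 1) ≤ V t + K) :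
    limsup (fun T : ℕ => (1 / (T : ℝ)) * ∑ t ∈ Finset.Icc 1 T, c t) atTop ≤ K := by
  have htelescope : ∀ T : ℕ, ∑ t ∈ Finset.Icc 1 T, c t + V (T + 1) ≤ V 1 + T * K := by
    intro T
    induction T with
    | zero => simp
    | succ T ih =>
      rw [Finset.sum_Icc_succ_top (by omega)]
      push_cast
      linarith [hstep (T + 1)]
  have hbound : ∀ᶠ T : ℕ in atTop,
      (1 / (T : ℝ)) * ∑ t ∈ Finset.Icc 1 T, c t ≤ V 1 / T + K := by
    filter_upwards [eventually_ge_atTop 1] with T hT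
    have hT : (0 : ℝ) < T := by exact_mod_cast hT
    calc (1 / (T : ℝ)) * ∑ t ∈ Finset.Icc 1 T, c t ≤ (1 / (T : ℝ)) * (V 1 + T * K) := by
          gcongr
          linarith [htelescope T, hV (T + 1)]
      _ = V 1 / T + K := by field_simp
  have hlim : Tendsto (fun T : ℕ => V 1 / T + K) atTop (nhds K) := by
    simpa using (tendsto_const_div_atTop_nhds_zero_nat (V 1)).add_const K
  calc limsup (fun T : ℕ => (1 / (T : ℝ)) * ∑ t ∈ Finset.Icc 1 T, c t) atTop
      ≤ limsup (fun T : ℕ => V 1 / T + K) atTop :=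
        limsup_le_limsup hbound (isCoboundedUnder_le_of_le atTop fun T =>
          mul_nonneg (by positivity) (Finset.sum_nonneg fun t _ => hc t)) hlim.isBoundedUnder_le
    _ = K := hlim.limsup_eq

/-- LMI-based bound on noise amplification (Lemma 1 of the paper): if
`X ⪰ 0`, `λ ≥ 0` satisfy the LMI and the nonlinearity `Δ` satisfies the
quadratic constraint `[y;u]ᵀ Π [y;u] ≥ 0` with `u = Δ(y)`, then the stochastic
system `ψ^{t+1} = Aψ^t + σ B_w w^t + B_u Δ(C_y ψ^t)`, `z^t = C_z ψ^t` driven by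
zero-mean identity-covariance white noise satisfies
`limsup_T (1/T) Σ_{t=1}^T E‖z^t‖² ≤ σ² trace(B_wᵀ X B_w)`. -/
theorem stmt_13 (nψ nw nu nz ny : ℕ) (σ lamb : ℝ) (hlamb : 0 ≤ lamb)
    (A : Matrix (Fin nψ) (Fin nψ) ℝ) (Bw : Matrix (Fin nψ) (Fin nw) ℝ)
    (Bu : Matrix (Fin nψ) (Fin nu) ℝ) (Cz : Matrix (Fin nz) (Fin nψ) ℝ)
    (Cy : Matrix (Fin ny) (Fin nψ) ℝ)
    (Pmat : Matrix (Fin ny ⊕ Fin nu) (Fin ny ⊕ Fin nu) ℝ)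
    (X : Matrix (Fin nψ) (Fin nψ) ℝ) (hX : X.PosSemidef)
    (hLMI : (-(Matrix.fromBlocks (Aᵀ * X * A - X + Czᵀ * Cz) (Aᵀ * X * Bu)
          (Buᵀ * X * A) (Buᵀ * X * Bu)
        + lamb • (Matrix.fromBlocks Cyᵀ 0 0 (1 : Matrix (Fin nu) (Fin nu) ℝ) * Pmat *
            Matrix.fromBlocks Cy 0 0 (1 : Matrix (Fin nu) (Fin nu) ℝ)))).PosSemidef)
    (Δ : (Fin ny → ℝ) → (Fin nu → ℝ)) (hΔmeas : Measurable Δ)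
    (hquad : ∀ y : Fin ny → ℝ,
      0 ≤ Sum.elim y (Δ y) ⬝ᵥ (Pmat *ᵥ Sum.elim y (Δ y)))
    {Ω : Type*} [MeasurableSpace Ω] (μ : Measure Ω) [IsProbabilityMeasure μ]
    (ψ : ℕ → Ω → Fin nψ → ℝ) (w : ℕ → Ω → Fin nw → ℝ)
    (hrec : ∀ t ω, ψ (t + 1) ω =
      A *ᵥ ψ t ω + σ • (Bw *ᵥ w t ω) + Bu *ᵥ Δ (Cy *ᵥ ψ t ω))
    (hψmeas : ∀ t, Measurable (ψ t)) (hwmeas : ∀ t, Measurable (w t))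
    (hψint : ∀ t, Integrable (fun ω => ∑ i, (ψ t ω i) ^ 2) μ)
    (hwint : ∀ t, Integrable (fun ω => ∑ i, (w t ω i) ^ 2) μ)
    (hmean : ∀ t, ∀ i : Fin nw, ∫ ω, w t ω i ∂μ = 0)
    (hcov : ∀ t, ∀ i j : Fin nw, ∫ ω, w t ω i * w t ω j ∂μ = if i = j then 1 else 0)
    (hindep : ∀ t, IndepFun (ψ t) (w t) μ) :
    limsup (fun T : ℕ =>
        (1 / (T : ℝ)) * ∑ t ∈ Finset.Icc 1 T, ∫ ω, ∑ i, ((Cz *ᵥ ψ t ω) i) ^ 2 ∂μ) atTop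
      ≤ σ ^ 2 * (Bwᵀ * X * Bw).trace := by
  set F : (Fin nψ → ℝ) → Fin nψ → ℝ := fun p => A *ᵥ p + Bu *ᵥ Δ (Cy *ᵥ p)
  have hdiss : ∀ p, ∑ i, (Cz *ᵥ p) i ^ 2 + F p ⬝ᵥ (X *ᵥ F p) ≤ p ⬝ᵥ (X *ᵥ p) := fun p => by
    simpa only [dotProduct_self_eq_sum_sq] using
      output_energy_add_storage_le_of_lmi hlamb hLMI p _ (hquad (Cy *ᵥ p))
  have hψL2 t := memLp_two_apply_of_integrable_sum_sq (hψmeas t) (hψint t)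
  have hnext : ∀ t ω, ψ (t + 1) ω = F (ψ t ω) + σ • (Bw *ᵥ w t ω) := fun t ω =>
    (hrec t ω).trans (add_right_comm _ _ _)
  refine limsup_average_le_of_add_succ_le (V := fun t => ∫ ω, ψ t ω ⬝ᵥ (X *ᵥ ψ t ω) ∂μ)
    (fun t => integral_nonneg fun ω => by positivity)
    (fun t => integral_nonneg fun ω => hX.dotProduct_mulVec_nonneg' _) fun t => ?_
  simp only [hnext]
  exact integral_add_integral_quadForm_le hX Bw σ (by fun_prop) (by fun_prop)
    (fun x => by positivity) hdiss (hψmeas t)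
    (integrable_dotProduct (hψL2 t) (memLp_two_mulVec_apply X (hψL2 t)))
    (memLp_two_apply_of_integrable_sum_sq (hwmeas t) (hwint t)) (hmean t) (hcov t) (hindep t)
end

section
/- For gradient descent with α = 1/L, the supremum over all f ∈ F_m^L of the steady-state variance amplification J (with σ=1) of the iterate error x^t - x* equals q_gd = nκ²/(2κ-1), where κ = L/m; in particular the quadratic f(x) = (m/2)‖x‖² attains this supremum. -/
/-!
Write `f = φ + (m/2)‖·‖²` with `φ` convex and `(L - m)`-smooth. Cocoercivity of `∇φ` makes the
gradient step `x ↦ x - ∇f(x)/L` a `(1 - m/L)`-contraction, and for the quadratic it is exactly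
multiplication by `1 - m/L`. As the noise is centred, has identity covariance and is independent
of the current iterate, `eₜ = E‖xᵗ - x*‖²` satisfies `eₜ₊₁ ≤ (1 - m/L)² eₜ + n`, with equality for
the quadratic. The Cesàro averages of such a sequence have limsup at most (resp. exactly)
`n / (1 - (1 - 1/κ)²) = nκ² / (2κ - 1)`.
-/

open MeasureTheory ProbabilityTheory Filter
open Set InnerProductSpace Finset Topology
open scoped RealInnerProductSpace

section Smooth

variable {E : Type*} [NormedAddCommGroup E] [InnerProductSpace ℝ E] [CompleteSpace E]
  {φ : E → ℝ}

theorem hasDerivAt_comp_add_smul (hφ : Differentiable ℝ φ) (x d : E) (t : ℝ) :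
    HasDerivAt (fun s : ℝ => φ (x + s • d)) ⟪gradient φ (x + t • d), d⟫_ℝ t := by
  have hline : HasDerivAt (fun s : ℝ => x + s • d) d t := by
    simpa using ((hasDerivAt_id t).smul_const d).const_add x
  simpa [toDual_apply_apply, Function.comp_def] using
    (hφ (x + t • d)).hasGradientAt.hasFDerivAt.comp_hasDerivAt t hline

theorem ConvexOn.add_inner_gradient_le (hc : ConvexOn ℝ univ φ) (hφ : Differentiable ℝ φ)
    (x y : E) : φ x + ⟪gradient φ x, y - x⟫_ℝ ≤ φ y := by
  have hline : ConvexOn ℝ univ (fun s : ℝ => φ (x + s • (y - x))) := by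
    have h := hc.comp_affineMap (AffineMap.lineMap x y : ℝ →ᵃ[ℝ] E)
    rw [preimage_univ] at h
    have hcomp : (fun s : ℝ => φ (x + s • (y - x))) = φ ∘ AffineMap.lineMap x y := by
      ext s
      simp [AffineMap.lineMap_apply, add_comm]
    rwa [hcomp]
  have hd := hasDerivAt_comp_add_smul hφ x (y - x) 0
  have hslope := hline.le_slope_of_hasDerivAt (mem_univ 0) (mem_univ 1) one_pos hd
  simp only [slope_def_field, zero_smul, add_zero, one_smul, add_sub_cancel, sub_zero,
    div_one] at hslope
  linarith

theorem le_add_inner_gradient_add_sq (hφ : Differentiable ℝ φ) {ℓ : ℝ}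
    (hub : ∀ z w : E, ⟪gradient φ z - gradient φ w, z - w⟫_ℝ ≤ ℓ * ‖z - w‖ ^ 2) (x y : E) :
    φ y ≤ φ x + ⟪gradient φ x, y - x⟫_ℝ + ℓ / 2 * ‖y - x‖ ^ 2 := by
  set d := y - x
  set g₀ := ⟪gradient φ x, d⟫_ℝ
  set h : ℝ → ℝ := fun s => φ (x + s • d) - s * g₀ - ℓ * ‖d‖ ^ 2 * s ^ 2 / 2
  have hderiv : ∀ t, HasDerivAt h (⟪gradient φ (x + t • d), d⟫_ℝ - g₀ - ℓ * ‖d‖ ^ 2 * t) t := by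
    intro t
    have hsq := ((hasDerivAt_pow 2 t).const_mul (ℓ * ‖d‖ ^ 2)).div_const 2
    exact (((hasDerivAt_comp_add_smul hφ x d t).sub ((hasDerivAt_id t).mul_const g₀)).sub
      hsq).congr_deriv (by simp; ring)
  -- on `(0, 1)` the derivative is `(⟪∇φ (x + t d) - ∇φ x, t d⟫ - ℓ‖t d‖²) / t ≤ 0`
  have hanti : AntitoneOn h (Icc 0 1) := by
    refine antitoneOn_of_deriv_nonpos (convex_Icc 0 1)
      (fun t _ => (hderiv t).continuousAt.continuousWithinAt)
      (fun t _ => (hderiv t).differentiableAt.differentiableWithinAt) fun t ht => ?_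
    rw [interior_Icc] at ht
    have hzw := hub (x + t • d) x
    rw [add_sub_cancel_left, inner_smul_right, norm_smul, Real.norm_eq_abs,
      abs_of_pos ht.1] at hzw
    rw [(hderiv t).deriv, ← inner_sub_left]
    nlinarith [ht.1]
  have h10 := hanti (left_mem_Icc.2 zero_le_one) (right_mem_Icc.2 zero_le_one) zero_le_one
  simp only [h, zero_smul, add_zero, one_smul, d, add_sub_cancel] at h10
  linarith

theorem norm_gradient_sub_sq_le_bregman (hc : ConvexOn ℝ univ φ) (hφ : Differentiable ℝ φ)
    {ℓ : ℝ} (hℓ : 0 ≤ ℓ)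
    (hub : ∀ z w : E, ⟪gradient φ z - gradient φ w, z - w⟫_ℝ ≤ ℓ * ‖z - w‖ ^ 2) (a b : E) :
    ‖gradient φ b - gradient φ a‖ ^ 2 ≤ 2 * ℓ * (φ b - φ a - ⟪gradient φ a, b - a⟫_ℝ) := by
  set g := gradient φ b - gradient φ a
  set D := φ b - φ a - ⟪gradient φ a, b - a⟫_ℝ
  have hD : 0 ≤ D := by linarith [hc.add_inner_gradient_le hφ a b]
  -- the two first-order bounds at `b - s • g` give a quadratic in `s` that is nonnegative for
  -- every `s`; its discriminant is the claim
  have hquad : ∀ s : ℝ, 0 ≤ ℓ / 2 * ‖g‖ ^ 2 * (s * s) + (-‖g‖ ^ 2) * s + D := by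
    intro s
    have hlow := hc.add_inner_gradient_le hφ a (b - s • g)
    have hup := le_add_inner_gradient_add_sq hφ hub b (b - s • g)
    have hg : ⟪gradient φ b, g⟫_ℝ - ⟪gradient φ a, g⟫_ℝ = ‖g‖ ^ 2 := by
      rw [← inner_sub_left, real_inner_self_eq_norm_sq]
    rw [show b - s • g - a = (b - a) - s • g by abel, inner_sub_right, inner_smul_right] at hlow
    rw [sub_sub_cancel_left, inner_neg_right, inner_smul_right, norm_neg, norm_smul,
      Real.norm_eq_abs, mul_pow, sq_abs] at hup
    have hg' : s * ⟪gradient φ b, g⟫_ℝ = s * ‖g‖ ^ 2 + s * ⟪gradient φ a, g⟫_ℝ := by rw [← hg]; ring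
    simp only [D]
    nlinarith
  have hdisc := discrim_le_zero hquad
  rw [discrim] at hdisc
  nlinarith [sq_nonneg ‖g‖, mul_nonneg hℓ hD]

theorem norm_gradient_sub_sq_le_mul_inner (hc : ConvexOn ℝ univ φ) (hφ : Differentiable ℝ φ)
    {ℓ : ℝ} (hℓ : 0 ≤ ℓ)
    (hub : ∀ z w : E, ⟪gradient φ z - gradient φ w, z - w⟫_ℝ ≤ ℓ * ‖z - w‖ ^ 2) (x y : E) :
    ‖gradient φ y - gradient φ x‖ ^ 2 ≤ ℓ * ⟪gradient φ y - gradient φ x, y - x⟫_ℝ := by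
  have hxy := norm_gradient_sub_sq_le_bregman hc hφ hℓ hub x y
  have hyx := norm_gradient_sub_sq_le_bregman hc hφ hℓ hub y x
  rw [← norm_neg, neg_sub] at hyx
  have hsymm : ⟪gradient φ y - gradient φ x, y - x⟫_ℝ
      = -⟪gradient φ x, y - x⟫_ℝ - ⟪gradient φ y, x - y⟫_ℝ := by
    rw [inner_sub_left, ← neg_sub y x, inner_neg_right]; ring
  rw [hsymm]
  linarith

theorem hasGradientAt_sub_mul_norm_sq {f : E → ℝ} (hf : Differentiable ℝ f) (m : ℝ) (z : E) :
    HasGradientAt (fun x => f x - m / 2 * ‖x‖ ^ 2) (gradient f z - m • z) z := by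
  rw [hasGradientAt_iff_hasFDerivAt]
  have hsq : HasFDerivAt (fun x : E => ‖x‖ ^ 2) (2 • innerSL ℝ z) z := by
    simpa using (hasFDerivAt_id z).norm_sq
  refine ((hf z).hasGradientAt.hasFDerivAt.sub (hsq.const_mul (m / 2))).congr_fderiv ?_
  ext v
  simp [toDual_apply_apply]
  ring

theorem norm_sub_smul_gradient_sub_sq_le {f : E → ℝ} {m L : ℝ} (hL : 0 < L) (hmL : m ≤ L)
    (hf : Differentiable ℝ f) (hsc : StrongConvexOn univ m f)
    (hlip : LipschitzWith (Real.toNNReal L) (gradient f)) (x y : E) :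
    ‖(x - (1 / L) • gradient f x) - (y - (1 / L) • gradient f y)‖ ^ 2
      ≤ (1 - m / L) ^ 2 * ‖x - y‖ ^ 2 := by
  -- `φ = f - (m/2)‖·‖²` is convex with `(L - m)`-bounded curvature
  set φ := fun x => f x - m / 2 * ‖x‖ ^ 2
  have hφ : Differentiable ℝ φ := fun z => (hasGradientAt_sub_mul_norm_sq hf m z).differentiableAt
  have hgrad : ∀ z, gradient φ z = gradient f z - m • z := fun z =>
    (hasGradientAt_sub_mul_norm_sq hf m z).gradient
  have hub : ∀ z w : E, ⟪gradient φ z - gradient φ w, z - w⟫_ℝ ≤ (L - m) * ‖z - w‖ ^ 2 := by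
    intro z w
    have hlipzw : ‖gradient f z - gradient f w‖ ≤ L * ‖z - w‖ := by
      simpa [dist_eq_norm, Real.coe_toNNReal L hL.le] using hlip.dist_le_mul z w
    have hinner := (real_inner_le_norm (gradient f z - gradient f w) (z - w)).trans
      (mul_le_mul_of_nonneg_right hlipzw (norm_nonneg _))
    rw [hgrad, hgrad, show gradient f z - m • z - (gradient f w - m • w)
        = (gradient f z - gradient f w) - m • (z - w) by module,
      inner_sub_left, real_inner_smul_left, real_inner_self_eq_norm_sq]
    nlinarith
  have hco := norm_gradient_sub_sq_le_mul_inner (strongConvexOn_iff_convex.mp hsc) hφ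
    (sub_nonneg.2 hmL) hub y x
  set h := gradient φ x - gradient φ y
  have hstep : (x - (1 / L) • gradient f x) - (y - (1 / L) • gradient f y)
      = (1 - m / L) • (x - y) - (1 / L) • h := by
    simp only [h, hgrad]
    module
  have hinner : 0 ≤ (L - m) * ⟪h, x - y⟫_ℝ := (sq_nonneg _).trans hco
  rw [hstep, norm_sub_sq_real, norm_smul, norm_smul, real_inner_smul_left, real_inner_smul_right,
    Real.norm_eq_abs, Real.norm_eq_abs, mul_pow, mul_pow, sq_abs, sq_abs, real_inner_comm]
  have hL' : L ≠ 0 := hL.ne'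
  field_simp
  nlinarith

end Smooth

section Noise

variable {Ω : Type*} [MeasurableSpace Ω] {μ : Measure Ω}

theorem integral_norm_add_sq_of_indepFun [IsFiniteMeasure μ] {F : Type*} [NormedAddCommGroup F]
    [InnerProductSpace ℝ F] [CompleteSpace F] [MeasurableSpace F] [BorelSpace F]
    {U W : Ω → F} (hUW : IndepFun U W μ) (hU : MemLp U 2 μ) (hW : MemLp W 2 μ)
    (hW0 : ∫ ω, W ω ∂μ = 0) :
    ∫ ω, ‖U ω + W ω‖ ^ 2 ∂μ = ∫ ω, ‖U ω‖ ^ 2 ∂μ + ∫ ω, ‖W ω‖ ^ 2 ∂μ := by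
  have hU1 := hU.integrable one_le_two
  have hW1 := hW.integrable one_le_two
  have hcross : ∫ ω, ⟪U ω, W ω⟫_ℝ ∂μ = 0 := by
    have hbilin := hUW.integral_bilin hU1 hW1 (innerSL ℝ)
    rwa [hW0, map_zero] at hbilin
  have hcross_int : Integrable (fun ω => 2 * ⟪U ω, W ω⟫_ℝ) μ :=
    (hUW.integrable_bilin hU1 hW1 (innerSL ℝ)).const_mul 2
  have hU2 : Integrable (fun ω => ‖U ω‖ ^ 2 + 2 * ⟪U ω, W ω⟫_ℝ) μ :=
    hU.norm.integrable_sq.add hcross_int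
  simp_rw [norm_add_sq_real]
  rw [integral_add hU2 hW.norm.integrable_sq, integral_add hU.norm.integrable_sq hcross_int,
    integral_const_mul, hcross, mul_zero, add_zero]

theorem integral_norm_sq_eq_card {ι : Type*} [Fintype ι] {W : Ω → EuclideanSpace ℝ ι}
    (hW : MemLp W 2 μ) (hvar : ∀ i, ∫ ω, W ω i * W ω i ∂μ = 1) :
    ∫ ω, ‖W ω‖ ^ 2 ∂μ = Fintype.card ι := by
  have hcoord : ∀ i, Integrable (fun ω => W ω i * W ω i) μ := fun i => by
    simpa [sq] using (hW.continuousLinearMap_comp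
      (EuclideanSpace.proj i : EuclideanSpace ℝ ι →L[ℝ] ℝ)).integrable_sq
  simp_rw [EuclideanSpace.real_norm_sq_eq, sq]
  simp [integral_finsetSum _ fun i _ => hcoord i, hvar]

theorem integral_norm_sq_comp_add_noise [IsProbabilityMeasure μ] {α ι : Type*} [MeasurableSpace α]
    [Fintype ι] {G : α → EuclideanSpace ℝ ι} {X : Ω → α} {W : Ω → EuclideanSpace ℝ ι}
    (hG : Measurable G) (hX : Measurable X) (hGX : Integrable (fun ω => ‖G (X ω)‖ ^ 2) μ)
    (hW : Measurable W) (hW2 : Integrable (fun ω => ‖W ω‖ ^ 2) μ) (hW0 : ∫ ω, W ω ∂μ = 0)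
    (hvar : ∀ i, ∫ ω, W ω i * W ω i ∂μ = 1) (hXW : IndepFun X W μ) :
    ∫ ω, ‖G (X ω) + W ω‖ ^ 2 ∂μ = ∫ ω, ‖G (X ω)‖ ^ 2 ∂μ + Fintype.card ι := by
  have hWL2 := (memLp_two_iff_integrable_sq_norm hW.aestronglyMeasurable).2 hW2
  have hind : IndepFun (fun ω => G (X ω)) W μ := hXW.comp hG measurable_id
  rw [integral_norm_add_sq_of_indepFun hind
    ((memLp_two_iff_integrable_sq_norm (hG.comp hX).aestronglyMeasurable).2 hGX) hWL2 hW0,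
    integral_norm_sq_eq_card hWL2 hvar]

end Noise

section Averages

theorem Filter.Tendsto.one_div_mul_sum_range_succ {a : ℕ → ℝ} {l : ℝ}
    (h : Tendsto a atTop (𝓝 l)) :
    Tendsto (fun t : ℕ => (1 / (t : ℝ)) * ∑ k ∈ range (t + 1), a k) atTop (𝓝 l) := by
  have hsucc := h.cesaro.comp (tendsto_add_atTop_nat 1)
  have hratio : Tendsto (fun t : ℕ => 1 + 1 / (t : ℝ)) atTop (𝓝 1) := by
    simpa using tendsto_one_div_atTop_nhds_zero_nat.const_add (1 : ℝ)
  refine (one_mul l ▸ hratio.mul hsucc).congr' ?_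
  filter_upwards [eventually_ne_atTop 0] with t ht
  have htR : (t : ℝ) ≠ 0 := Nat.cast_ne_zero.2 ht
  simp only [Function.comp_apply]
  push_cast
  field_simp

theorem tendsto_of_affine_recurrence {a : ℕ → ℝ} {c ν : ℝ} (hc : |c| < 1)
    (h : ∀ k, a (k + 1) = c * a k + ν) : Tendsto a atTop (𝓝 (ν / (1 - c))) := by
  have hc1 : 1 - c ≠ 0 := by linarith [le_abs_self c]
  set S := ν / (1 - c)
  have hS : c * S + ν = S := by simp only [S]; field_simp; ring
  have hsol : ∀ k, a k = S + c ^ k * (a 0 - S) := by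
    intro k
    induction k with
    | zero => simp
    | succ k ih =>
      rw [h, ih, pow_succ]
      linear_combination hS
  have hlim := ((tendsto_pow_atTop_nhds_zero_of_abs_lt_one hc).mul_const (a 0 - S)).const_add S
  rw [zero_mul, add_zero] at hlim
  exact hlim.congr fun k => (hsol k).symm

theorem limsup_one_div_mul_sum_range_succ_of_affine_recurrence {a : ℕ → ℝ} {c ν : ℝ}
    (hc : |c| < 1) (h : ∀ k, a (k + 1) = c * a k + ν) :
    limsup (fun t : ℕ => (1 / (t : ℝ)) * ∑ k ∈ range (t + 1), a k) atTop = ν / (1 - c) :=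
  (tendsto_of_affine_recurrence hc h).one_div_mul_sum_range_succ.limsup_eq

theorem limsup_one_div_mul_sum_range_succ_le_of_affine_recurrence {a : ℕ → ℝ} {c ν : ℝ}
    (hc0 : 0 ≤ c) (hc1 : c < 1) (ha : ∀ k, 0 ≤ a k) (h : ∀ k, a (k + 1) ≤ c * a k + ν) :
    limsup (fun t : ℕ => (1 / (t : ℝ)) * ∑ k ∈ range (t + 1), a k) atTop ≤ ν / (1 - c) := by
  -- compare with the solution of the equality recurrence started at `a 0`
  set b : ℕ → ℝ := fun k => (fun y => c * y + ν)^[k] (a 0)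
  have hb : ∀ k, b (k + 1) = c * b k + ν := fun k => Function.iterate_succ_apply' _ _ _
  have hab : ∀ k, a k ≤ b k := by
    intro k
    induction k with
    | zero => rfl
    | succ k ih => rw [hb]; nlinarith [h k]
  have hbavg :=
    (tendsto_of_affine_recurrence (abs_lt.2 ⟨by linarith, hc1⟩) hb).one_div_mul_sum_range_succ
  refine (limsup_le_limsup (Eventually.of_forall fun t => ?_) ?_ hbavg.isBoundedUnder_le).trans
    hbavg.limsup_eq.le
  · exact mul_le_mul_of_nonneg_left (sum_le_sum fun k _ => hab k) (by positivity)
  · exact isCoboundedUnder_le_of_le atTop fun t =>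
      mul_nonneg (by positivity) (sum_nonneg fun k _ => ha k)

end Averages

section GradientDescent

variable {Ω ι : Type*} [MeasurableSpace Ω] {μ : Measure Ω} [IsProbabilityMeasure μ] [Fintype ι]
  {X X' W : Ω → EuclideanSpace ℝ ι}

theorem integral_norm_sub_sq_gradient_step_le {f : EuclideanSpace ℝ ι → ℝ} {m L : ℝ}
    (hL : 0 < L) (hmL : m ≤ L) (hf : Differentiable ℝ f) (hsc : StrongConvexOn univ m f)
    (hlip : LipschitzWith (Real.toNNReal L) (gradient f)) {xstar : EuclideanSpace ℝ ι}
    (hstar : gradient f xstar = 0) (hX' : ∀ ω, X' ω = X ω - (1 / L) • gradient f (X ω) + W ω)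
    (hX : Measurable X) (hX2 : Integrable (fun ω => ‖X ω - xstar‖ ^ 2) μ) (hW : Measurable W)
    (hW2 : Integrable (fun ω => ‖W ω‖ ^ 2) μ) (hW0 : ∫ ω, W ω ∂μ = 0)
    (hvar : ∀ i, ∫ ω, W ω i * W ω i ∂μ = 1) (hXW : IndepFun X W μ) :
    ∫ ω, ‖X' ω - xstar‖ ^ 2 ∂μ
      ≤ (1 - m / L) ^ 2 * ∫ ω, ‖X ω - xstar‖ ^ 2 ∂μ + Fintype.card ι := by
  set G : EuclideanSpace ℝ ι → EuclideanSpace ℝ ι := fun v => v - (1 / L) • gradient f v - xstar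
  have hG : Continuous G :=
    (continuous_id.sub (hlip.continuous.const_smul (1 / L))).sub continuous_const
  have hcontr : ∀ v, ‖G v‖ ^ 2 ≤ (1 - m / L) ^ 2 * ‖v - xstar‖ ^ 2 := fun v => by
    simpa [G, hstar] using norm_sub_smul_gradient_sub_sq_le hL hmL hf hsc hlip v xstar
  have hGX : Integrable (fun ω => ‖G (X ω)‖ ^ 2) μ := by
    refine (hX2.const_mul ((1 - m / L) ^ 2)).mono'
      ((hG.measurable.comp hX).norm.pow_const 2).aestronglyMeasurable
      (Eventually.of_forall fun ω => ?_)
    rw [Real.norm_eq_abs, abs_of_nonneg (by positivity)]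
    exact hcontr (X ω)
  calc ∫ ω, ‖X' ω - xstar‖ ^ 2 ∂μ = ∫ ω, ‖G (X ω) + W ω‖ ^ 2 ∂μ := by
        congr with ω; rw [hX']; simp only [G]; abel_nf
    _ = ∫ ω, ‖G (X ω)‖ ^ 2 ∂μ + Fintype.card ι :=
        integral_norm_sq_comp_add_noise hG.measurable hX hGX hW hW2 hW0 hvar hXW
    _ ≤ (1 - m / L) ^ 2 * ∫ ω, ‖X ω - xstar‖ ^ 2 ∂μ + Fintype.card ι := by
        rw [← integral_const_mul]
        exact add_le_add_left (integral_mono hGX (hX2.const_mul _) fun ω => hcontr (X ω)) _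

theorem integral_norm_sq_quadratic_step (m L : ℝ)
    (hX' : ∀ ω, X' ω = X ω - (1 / L) • (m • X ω) + W ω) (hX : Measurable X)
    (hX2 : Integrable (fun ω => ‖X ω‖ ^ 2) μ) (hW : Measurable W)
    (hW2 : Integrable (fun ω => ‖W ω‖ ^ 2) μ) (hW0 : ∫ ω, W ω ∂μ = 0)
    (hvar : ∀ i, ∫ ω, W ω i * W ω i ∂μ = 1) (hXW : IndepFun X W μ) :
    ∫ ω, ‖X' ω‖ ^ 2 ∂μ = (1 - m / L) ^ 2 * ∫ ω, ‖X ω‖ ^ 2 ∂μ + Fintype.card ι := by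
  have hnorm : ∀ v : EuclideanSpace ℝ ι, ‖(1 - m / L) • v‖ ^ 2 = (1 - m / L) ^ 2 * ‖v‖ ^ 2 :=
    fun v => by rw [norm_smul, Real.norm_eq_abs, mul_pow, sq_abs]
  have hGX : Integrable (fun ω => ‖(1 - m / L) • X ω‖ ^ 2) μ := by
    simpa only [hnorm] using hX2.const_mul ((1 - m / L) ^ 2)
  calc ∫ ω, ‖X' ω‖ ^ 2 ∂μ = ∫ ω, ‖(1 - m / L) • X ω + W ω‖ ^ 2 ∂μ := by
        congr with ω; rw [hX']; congr 2; module
    _ = ∫ ω, ‖(1 - m / L) • X ω‖ ^ 2 ∂μ + Fintype.card ι :=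
        integral_norm_sq_comp_add_noise (measurable_const_smul _) hX hGX hW hW2 hW0 hvar hXW
    _ = (1 - m / L) ^ 2 * ∫ ω, ‖X ω‖ ^ 2 ∂μ + Fintype.card ι := by
        simp only [hnorm, integral_const_mul]

end GradientDescent

theorem stmt_14_general (n : ℕ) (m L : ℝ) (hm : 0 < m) (hmL : m ≤ L) :
    -- upper bound for all f in F_m^L
    (∀ (f : EuclideanSpace ℝ (Fin n) → ℝ) (xstar : EuclideanSpace ℝ (Fin n)),
      Differentiable ℝ f → StrongConvexOn Set.univ m f →
      LipschitzWith (Real.toNNReal L) (gradient f) → gradient f xstar = 0 →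
      ∀ (Ω : Type) (_ : MeasurableSpace Ω) (μ : Measure Ω), IsProbabilityMeasure μ →
      ∀ (x w : ℕ → Ω → EuclideanSpace ℝ (Fin n)),
        (∀ t ω, x (t + 1) ω = x t ω - (1 / L) • gradient f (x t ω) + w t ω) →
        (∀ t, Measurable (x t)) → (∀ t, Measurable (w t)) →
        (∀ t, Integrable (fun ω => ‖x t ω - xstar‖ ^ 2) μ) →
        (∀ t, Integrable (fun ω => ‖w t ω‖ ^ 2) μ) →
        (∀ t, ∫ ω, w t ω ∂μ = 0) →
        (∀ t, ∀ i j : Fin n, ∫ ω, (w t ω) i * (w t ω) j ∂μ = if i = j then 1 else 0) →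
        (∀ t, IndepFun (x t) (w t) μ) →
        limsup (fun t : ℕ =>
            (1 / (t : ℝ)) * ∑ k ∈ Finset.range (t + 1), ∫ ω, ‖x k ω - xstar‖ ^ 2 ∂μ) atTop
          ≤ n * (L / m) ^ 2 / (2 * (L / m) - 1)) ∧
    -- the quadratic f(x) = (m/2)‖x‖² (whose minimizer is x* = 0) attains the supremum
    (∀ (Ω : Type) (_ : MeasurableSpace Ω) (μ : Measure Ω), IsProbabilityMeasure μ →
      ∀ (x w : ℕ → Ω → EuclideanSpace ℝ (Fin n)),
        (∀ t ω, x (t + 1) ω = x t ω - (1 / L) • (m • x t ω) + w t ω) →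
        (∀ t, Measurable (x t)) → (∀ t, Measurable (w t)) →
        (∀ t, Integrable (fun ω => ‖x t ω‖ ^ 2) μ) →
        (∀ t, Integrable (fun ω => ‖w t ω‖ ^ 2) μ) →
        (∀ t, ∫ ω, w t ω ∂μ = 0) →
        (∀ t, ∀ i j : Fin n, ∫ ω, (w t ω) i * (w t ω) j ∂μ = if i = j then 1 else 0) →
        (∀ t, IndepFun (x t) (w t) μ) →
        limsup (fun t : ℕ =>
            (1 / (t : ℝ)) * ∑ k ∈ Finset.range (t + 1), ∫ ω, ‖x k ω‖ ^ 2 ∂μ) atTop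
          = n * (L / m) ^ 2 / (2 * (L / m) - 1)) := by
  have hL : 0 < L := hm.trans_le hmL
  have hc0 : 0 ≤ 1 - m / L := sub_nonneg.2 ((div_le_one hL).2 hmL)
  have hc1 : (1 - m / L) ^ 2 < 1 := pow_lt_one₀ hc0 (by linarith [div_pos hm hL]) two_ne_zero
  have hq : (n : ℝ) * (L / m) ^ 2 / (2 * (L / m) - 1)
      = Fintype.card (Fin n) / (1 - (1 - m / L) ^ 2) := by
    rw [Fintype.card_fin, show 1 - (1 - m / L) ^ 2 = (2 * (L / m) - 1) / (L / m) ^ 2 by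
      field_simp; ring, div_div_eq_mul_div]
  refine ⟨fun f xstar hf hsc hlip hstar Ω _ μ _ x w hx hxm hwm hx2 hw2 hw0 hwcov hxw => ?_,
    fun Ω _ μ _ x w hx hxm hwm hx2 hw2 hw0 hwcov hxw => ?_⟩ <;> rw [hq]
  · exact limsup_one_div_mul_sum_range_succ_le_of_affine_recurrence (sq_nonneg _) hc1
      (fun k => integral_nonneg fun _ => sq_nonneg _) fun t =>
      integral_norm_sub_sq_gradient_step_le hL hmL hf hsc hlip hstar (hx t) (hxm t) (hx2 t)
        (hwm t) (hw2 t) (hw0 t) (fun i => by simpa using hwcov t i i) (hxw t)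
  · exact limsup_one_div_mul_sum_range_succ_of_affine_recurrence
      (by rwa [abs_of_nonneg (sq_nonneg _)]) fun t =>
      integral_norm_sq_quadratic_step m L (hx t) (hxm t) (hx2 t) (hwm t) (hw2 t) (hw0 t)
        (fun i => by simpa using hwcov t i i) (hxw t)

/-- For gradient descent with `α = 1/L` and `σ = 1`, the supremum over
`f ∈ F_m^L` of the steady-state variance amplification
`J = limsup_t (1/t) Σ_{k=0}^t E‖x^k - x*‖²` equals `q_gd = nκ²/(2κ-1)`
(`κ = L/m`): every `f ∈ F_m^L` and every admissible noisy process satisfies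
`J ≤ q_gd`, and the quadratic `f(x) = (m/2)‖x‖²` attains this value. -/
theorem stmt_14 (n : ℕ) (hn : 0 < n) (m L : ℝ) (hm : 0 < m) (hmL : m ≤ L) :
    -- upper bound for all f in F_m^L
    (∀ (f : EuclideanSpace ℝ (Fin n) → ℝ) (xstar : EuclideanSpace ℝ (Fin n)),
      Differentiable ℝ f → StrongConvexOn Set.univ m f →
      LipschitzWith (Real.toNNReal L) (gradient f) → gradient f xstar = 0 →
      ∀ (Ω : Type) (_ : MeasurableSpace Ω) (μ : Measure Ω), IsProbabilityMeasure μ →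
      ∀ (x w : ℕ → Ω → EuclideanSpace ℝ (Fin n)),
        (∀ t ω, x (t + 1) ω = x t ω - (1 / L) • gradient f (x t ω) + w t ω) →
        (∀ t, Measurable (x t)) → (∀ t, Measurable (w t)) →
        (∀ t, Integrable (fun ω => ‖x t ω - xstar‖ ^ 2) μ) →
        (∀ t, Integrable (fun ω => ‖w t ω‖ ^ 2) μ) →
        (∀ t, ∫ ω, w t ω ∂μ = 0) →
        (∀ t, ∀ i j : Fin n, ∫ ω, (w t ω) i * (w t ω) j ∂μ = if i = j then 1 else 0) →
        (∀ t, IndepFun (x t) (w t) μ) →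
        limsup (fun t : ℕ =>
            (1 / (t : ℝ)) * ∑ k ∈ Finset.range (t + 1), ∫ ω, ‖x k ω - xstar‖ ^ 2 ∂μ) atTop
          ≤ n * (L / m) ^ 2 / (2 * (L / m) - 1)) ∧
    -- the quadratic f(x) = (m/2)‖x‖² (whose minimizer is x* = 0) attains the supremum
    (∀ (Ω : Type) (_ : MeasurableSpace Ω) (μ : Measure Ω), IsProbabilityMeasure μ →
      ∀ (x w : ℕ → Ω → EuclideanSpace ℝ (Fin n)),
        (∀ t ω, x (t + 1) ω = x t ω - (1 / L) • (m • x t ω) + w t ω) →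
        (∀ t, Measurable (x t)) → (∀ t, Measurable (w t)) →
        (∀ t, Integrable (fun ω => ‖x t ω‖ ^ 2) μ) →
        (∀ t, Integrable (fun ω => ‖w t ω‖ ^ 2) μ) →
        (∀ t, ∫ ω, w t ω ∂μ = 0) →
        (∀ t, ∀ i j : Fin n, ∫ ω, (w t ω) i * (w t ω) j ∂μ = if i = j then 1 else 0) →
        (∀ t, IndepFun (x t) (w t) μ) →
        limsup (fun t : ℕ =>
            (1 / (t : ℝ)) * ∑ k ∈ Finset.range (t + 1), ∫ ω, ‖x k ω‖ ^ 2 ∂μ) atTop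
          = n * (L / m) ^ 2 / (2 * (L / m) - 1)) :=
  stmt_14_general n m L hm hmL
end

section
/- For the heavy-ball method on a strongly convex quadratic with extreme Hessian eigenvalues m and L (κ = L/m), with any stabilizing α > 0 and 0 < β < 1 and noise magnitude σ, the variance amplification J and convergence rate ρ satisfy J/(1-ρ) ≥ σ²((κ+1)/8)². -/
/-!
The roots `z₁, z₂` of the characteristic polynomial at `λ = m` satisfy `z₁ z₂ = β` and
`(1 - z₁)(1 - z₂) = αm`, so `ρ ≥ √β` and `αm ≥ (1 - ρ)(1 - √β)`. The roots at `λ = L` lie in the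
open unit disk only if the polynomial is positive at `-1`, that is `αL < 2(1 + β)`. Under these
constraints an elementary inequality in `b = √β`, `s = αm`, `t = αL` and `A = 1 - ρ` gives
`Ĵ_hb(m) ≥ σ²((κ + 1)/8)² / (1 - ρ)`.
-/

lemma Complex.exists_add_eq_and_mul_eq (a b : ℂ) : ∃ z w : ℂ, z + w = a ∧ z * w = b := by
  obtain ⟨d, hd⟩ := IsAlgClosed.exists_pow_nat_eq (a ^ 2 - 4 * b) two_pos
  exact ⟨(a + d) / 2, (a - d) / 2, by ring, by linear_combination (-1 / 4 : ℂ) * hd⟩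

section RootsInDisk

variable {p q ρ : ℝ}

lemma exists_roots_norm_le
    (hroots : ∀ z : ℂ, z ^ 2 + (p : ℂ) * z + (q : ℂ) = 0 → ‖z‖ ≤ ρ) :
    ∃ z w : ℂ, z + w = -p ∧ z * w = q ∧ ‖z‖ ≤ ρ ∧ ‖w‖ ≤ ρ := by
  obtain ⟨z, w, hsum, hprod⟩ := Complex.exists_add_eq_and_mul_eq (-p) q
  refine ⟨z, w, hsum, hprod, hroots z ?_, hroots w ?_⟩
  · linear_combination z * hsum - hprod
  · linear_combination w * hsum - hprod

lemma sqrt_le_of_roots_norm_le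
    (hroots : ∀ z : ℂ, z ^ 2 + (p : ℂ) * z + (q : ℂ) = 0 → ‖z‖ ≤ ρ) : √q ≤ ρ := by
  obtain ⟨z, w, -, hprod, hz, hw⟩ := exists_roots_norm_le hroots
  have hρ : 0 ≤ ρ := (norm_nonneg z).trans hz
  have hq : |q| ≤ ρ ^ 2 := by
    calc |q| = ‖z‖ * ‖w‖ := by rw [← norm_mul, hprod, Complex.norm_real, Real.norm_eq_abs]
      _ ≤ ρ ^ 2 := by rw [sq]; exact mul_le_mul hz hw (norm_nonneg w) hρ
  exact Real.sqrt_le_iff.2 ⟨hρ, (le_abs_self q).trans hq⟩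

lemma mul_one_sub_sqrt_le_abs_of_roots_norm_le
    (hroots : ∀ z : ℂ, z ^ 2 + (p : ℂ) * z + (q : ℂ) = 0 → ‖z‖ ≤ ρ) (hρ : ρ ≤ 1) (hq : 0 ≤ q) :
    (1 - ρ) * (1 - √q) ≤ |1 + p + q| := by
  obtain ⟨z, w, hsum, hprod, hz, hw⟩ := exists_roots_norm_le hroots
  have hb := sqrt_le_of_roots_norm_le hroots
  have hzw : ‖z‖ * ‖w‖ = √q ^ 2 := by
    rw [Real.sq_sqrt hq, ← norm_mul, hprod, Complex.norm_real, Real.norm_of_nonneg hq]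
  have hval : (1 - z) * (1 - w) = ((1 + p + q : ℝ) : ℂ) := by
    push_cast; linear_combination (-1 : ℂ) * hsum + hprod
  have h1z : 1 - ‖z‖ ≤ ‖1 - z‖ := by simpa using norm_sub_norm_le (1 : ℂ) z
  have h1w : 1 - ‖w‖ ≤ ‖1 - w‖ := by simpa using norm_sub_norm_le (1 : ℂ) w
  have hsmall : ‖z‖ ≤ √q ∨ ‖w‖ ≤ √q := by
    by_contra! h
    nlinarith [hzw, mul_lt_mul'' h.1 h.2 (Real.sqrt_nonneg q) (Real.sqrt_nonneg q)]
  calc (1 - ρ) * (1 - √q) ≤ (1 - ‖z‖) * (1 - ‖w‖) := by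
        rcases hsmall with hzq | hwq
        · rw [mul_comm]
          exact mul_le_mul (by linarith) (by linarith) (by linarith) (by linarith [norm_nonneg z])
        · exact mul_le_mul (by linarith) (by linarith) (by linarith) (by linarith [norm_nonneg z])
    _ ≤ ‖1 - z‖ * ‖1 - w‖ :=
        mul_le_mul h1z h1w (by linarith) ((by linarith : (0 : ℝ) ≤ 1 - ‖z‖).trans h1z)
    _ = |1 + p + q| := by rw [← norm_mul, hval, Complex.norm_real, Real.norm_eq_abs]

end RootsInDisk

lemma exists_root_le_neg_one {p q : ℝ} (h : 1 - p + q ≤ 0) :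
    ∃ x : ℝ, x ^ 2 + p * x + q = 0 ∧ x ≤ -1 := by
  have hD : 0 ≤ p ^ 2 - 4 * q := by nlinarith [sq_nonneg (p - 2)]
  refine ⟨(-p - √(p ^ 2 - 4 * q)) / 2, ?_, ?_⟩
  · linear_combination (1 / 4 : ℝ) * Real.sq_sqrt hD
  · have : 2 - p ≤ √(p ^ 2 - 4 * q) :=
      Real.le_sqrt_of_sq_le (by nlinarith)
    linarith

lemma neg_one_eval_pos_of_roots_norm_le {p q ρ : ℝ}
    (hroots : ∀ z : ℂ, z ^ 2 + (p : ℂ) * z + (q : ℂ) = 0 → ‖z‖ ≤ ρ) (hρ : ρ < 1) :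
    0 < 1 - p + q := by
  by_contra! h
  obtain ⟨x, hx, hx1⟩ := exists_root_le_neg_one h
  have := hroots x (by exact_mod_cast hx)
  rw [Complex.norm_real, Real.norm_of_nonpos (by linarith)] at this
  linarith

/-- `x ↦ (2c + x)²(2c - x)/x` is antitone on `(0, ∞)`. -/
lemma sq_add_mul_sub_mul_le_of_le {c μ s : ℝ} (hc : 0 ≤ c) (hμ : 0 ≤ μ) (hμs : μ ≤ s) :
    (2 * c + s) ^ 2 * (2 * c - s) * μ ≤ (2 * c + μ) ^ 2 * (2 * c - μ) * s := by
  have hs : 0 ≤ s := hμ.trans hμs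
  have : 0 ≤ (s - μ) * (8 * c ^ 3 + 2 * c * μ * s + μ * s * (μ + s)) := by
    apply mul_nonneg (by linarith); positivity
  linear_combination this

lemma heavyBall_scaled_tradeoff {b s t A : ℝ} (hb : 0 ≤ b) (hA0 : 0 ≤ A) (hA : A ≤ 1 - b)
    (hAs : A * (1 - b) ≤ s) (hst : s ≤ t) (ht : t ≤ 2 * (1 + b ^ 2)) :
    (t + s) ^ 2 * (1 - b ^ 2) * (2 * (1 + b ^ 2) - s) * A ≤ 64 * (1 + b ^ 2) * s := by
  set c := 1 + b ^ 2
  set μ := (1 - b) * A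
  have hb1 : b ≤ 1 := by linarith
  have hμ : 0 ≤ μ := mul_nonneg (by linarith) hA0
  have hμs : μ ≤ s := by linarith [mul_comm A (1 - b)]
  have hμb : μ ≤ (1 - b) ^ 2 := by rw [sq]; exact mul_le_mul_of_nonneg_left hA (by linarith)
  have hs : 0 ≤ s := hμ.trans hμs
  have hcs : 0 ≤ 2 * c - s := by linarith
  have hP : (2 * c + (1 - b) ^ 2) ^ 2 * (1 + b) ≤ 32 := by
    have : 0 ≤ (1 - b) * (9 * b ^ 4 + 6 * b ^ 3 + 16 * b ^ 2 + 26 * b + 23) :=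
      mul_nonneg (by linarith) (by positivity)
    linear_combination this
  calc (t + s) ^ 2 * (1 - b ^ 2) * (2 * c - s) * A
      = (t + s) ^ 2 * (2 * c - s) * μ * (1 + b) := by ring
    _ ≤ (2 * c + s) ^ 2 * (2 * c - s) * μ * (1 + b) := by gcongr; linarith
    _ ≤ (2 * c + μ) ^ 2 * (2 * c - μ) * s * (1 + b) :=
        mul_le_mul_of_nonneg_right (sq_add_mul_sub_mul_le_of_le (by positivity) hμ hμs)
          (by linarith)
    _ ≤ (2 * c + (1 - b) ^ 2) ^ 2 * (2 * c) * s * (1 + b) := by gcongr <;> linarith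
    _ = (2 * c + (1 - b) ^ 2) ^ 2 * (1 + b) * (2 * c * s) := by ring
    _ ≤ 32 * (2 * c * s) := by gcongr
    _ = 64 * c * s := by ring

theorem stmt_15_general (m L α β σ J ρ : ℝ) (hm : 0 < m) (hmL : m ≤ L)
    (hα : 0 < α) (hβ0 : 0 < β) (hρ : ρ < 1)
    (hrootm : ∀ z : ℂ, z ^ 2 + ((α * m - 1 - β : ℝ) : ℂ) * z + (β : ℂ) = 0 → ‖z‖ ≤ ρ)
    (hrootL : ∀ z : ℂ, z ^ 2 + ((α * L - 1 - β : ℝ) : ℂ) * z + (β : ℂ) = 0 → ‖z‖ ≤ ρ)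
    (hJm : σ ^ 2 * (1 + β) / (α * m * (1 - β) * (2 * (1 + β) - α * m)) ≤ J) :
    σ ^ 2 * ((L / m + 1) / 8) ^ 2 ≤ J / (1 - ρ) := by
  have hs : 0 < α * m := mul_pos hα hm
  have hst : α * m ≤ α * L := mul_le_mul_of_nonneg_left hmL hα.le
  have hbρ : √β ≤ ρ := sqrt_le_of_roots_norm_le hrootm
  have hβ : √β ^ 2 = β := Real.sq_sqrt hβ0.le
  have hβ1 : β < 1 := by nlinarith [Real.sqrt_nonneg β]
  have hρs : (1 - ρ) * (1 - √β) ≤ α * m := by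
    have h := mul_one_sub_sqrt_le_abs_of_roots_norm_le hrootm hρ.le hβ0.le
    rwa [show 1 + (α * m - 1 - β) + β = α * m by ring, abs_of_pos hs] at h
  have htL : α * L < 2 * (1 + β) := by
    linarith [neg_one_eval_pos_of_roots_norm_le hrootL hρ]
  have key := heavyBall_scaled_tradeoff (Real.sqrt_nonneg β) (by linarith) (by linarith)
    hρs hst (by rw [hβ]; exact htL.le)
  rw [hβ] at key
  rw [le_div_iff₀ (by linarith)]
  refine le_trans ?_ hJm
  rw [le_div_iff₀ (mul_pos (mul_pos hs (by linarith)) (by linarith))]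
  calc σ ^ 2 * ((L / m + 1) / 8) ^ 2 * (1 - ρ) * (α * m * (1 - β) * (2 * (1 + β) - α * m))
      = σ ^ 2 * ((α * L + α * m) ^ 2 * (1 - β) * (2 * (1 + β) - α * m) * (1 - ρ))
          / (64 * (α * m)) := by field_simp; ring
    _ ≤ σ ^ 2 * (64 * (1 + β) * (α * m)) / (64 * (α * m)) := by gcongr
    _ = σ ^ 2 * (1 + β) := by field_simp

/-- Fundamental trade-off for the heavy-ball method: with any stabilizing
`α > 0`, `0 < β < 1` and noise magnitude `σ`, if `ρ < 1` dominates the moduli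
of the eigenvalues of the modal matrices at `λ = m` and `λ = L` (the roots of
`z² + (αλ-1-β)z + β`), and `J` dominates the modal variance contributions
`Ĵ_hb(m)`, `Ĵ_hb(L)`, then `J/(1-ρ) ≥ σ²((κ+1)/8)²` with `κ = L/m`. -/
theorem stmt_15 (m L α β σ J ρ : ℝ) (hm : 0 < m) (hmL : m ≤ L)
    (hα : 0 < α) (hβ0 : 0 < β) (hβ1 : β < 1) (hρ : ρ < 1)
    (hrootm : ∀ z : ℂ, z ^ 2 + ((α * m - 1 - β : ℝ) : ℂ) * z + (β : ℂ) = 0 → ‖z‖ ≤ ρ)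
    (hrootL : ∀ z : ℂ, z ^ 2 + ((α * L - 1 - β : ℝ) : ℂ) * z + (β : ℂ) = 0 → ‖z‖ ≤ ρ)
    (hJm : σ ^ 2 * (1 + β) / (α * m * (1 - β) * (2 * (1 + β) - α * m)) ≤ J)
    (hJL : σ ^ 2 * (1 + β) / (α * L * (1 - β) * (2 * (1 + β) - α * L)) ≤ J) :
    σ ^ 2 * ((L / m + 1) / 8) ^ 2 ≤ J / (1 - ρ) :=
  stmt_15_general m L α β σ J ρ hm hmL hα hβ0 hρ hrootm hrootL hJm
end

section
/- For the heavy-ball modal dynamics with eigenvalue λ and parameters α, β, the spectral radius of Â = [[0,1],[-β, 1+β-αλ]] equals √β if (1-√β)² ≤ αλ ≤ (1+√β)², and equals (1/2)|1+β-αλ| + (1/2)√((1+β-αλ)²-4β) otherwise, when 0 ≤ β < 1 and (1+β-αλ)² ≥ 4β in the second case. -/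
/-!
The eigenvalues of `Â` are the roots of `z² + bz + c` with `b = αλ - 1 - β`, `c = β`, given by
the quadratic formula `(-b ± s)/2` with `s² = b² - 4c`. If `b² ≤ 4c`, take `s = i√(4c - b²)`:
the roots are complex conjugate and both have modulus `√c`. If `4c ≤ b²`, the roots are real and
the larger modulus is `(|b| + √(b² - 4c))/2`, since `max |x + t| |x - t| = |x| + t` for `t ≥ 0`.
The condition `(1 - √β)² ≤ αλ ≤ (1 + √β)²` is `|αλ - 1 - β| ≤ 2√β`.
-/

def quadRootNorms (b c : ℂ) : Set ℝ := {r | ∃ z : ℂ, z ^ 2 + b * z + c = 0 ∧ r = ‖z‖}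

lemma quadRootNorms_eq_pair {b c s : ℂ} (hs : discrim 1 b c = s * s) :
    quadRootNorms b c = {‖(-b + s) / 2‖, ‖(-b - s) / 2‖} := by
  ext r
  have hroots := quadratic_eq_zero_iff one_ne_zero hs
  simp only [one_mul, mul_one] at hroots
  simp only [quadRootNorms, sq, hroots, Set.mem_ofPred_eq, Set.mem_insert_iff,
    Set.mem_singleton_iff]
  aesop

lemma isGreatest_quadRootNorms {b c s : ℂ} (hs : discrim 1 b c = s * s) :
    IsGreatest (quadRootNorms b c) (max ‖(-b + s) / 2‖ ‖(-b - s) / 2‖) :=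
  quadRootNorms_eq_pair hs ▸ isGreatest_pair

lemma max_abs_add_abs_sub (x t : ℝ) (ht : 0 ≤ t) : max |x + t| |x - t| = |x| + t := by
  rcases le_total 0 x with hx | hx
  · rw [abs_of_nonneg hx, abs_of_nonneg (by linarith : 0 ≤ x + t)]
    exact max_eq_left (abs_sub_le_iff.2 ⟨by linarith, by linarith⟩)
  · rw [abs_of_nonpos hx, abs_of_nonpos (by linarith : x - t ≤ 0)]
    exact (max_eq_right (abs_le.2 ⟨by linarith, by linarith⟩)).trans (by ring)

lemma isGreatest_quadRootNorms_of_sq_le {b c : ℝ} (h : b ^ 2 ≤ 4 * c) :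
    IsGreatest (quadRootNorms b c) √c := by
  set t := √(4 * c - b ^ 2)
  have ht : t ^ 2 = 4 * c - b ^ 2 := Real.sq_sqrt (by linarith)
  have hs : discrim 1 (b : ℂ) c = (t * Complex.I) * (t * Complex.I) := by
    have htc : (t : ℂ) ^ 2 = 4 * c - b ^ 2 := by exact_mod_cast ht
    rw [discrim]
    linear_combination -(t : ℂ) ^ 2 * Complex.I_sq + htc
  have hnorm (u : ℝ) (hu : u ^ 2 = t ^ 2) : ‖(-(b : ℂ) + u * Complex.I) / 2‖ = √c := by
    rw [show (-(b : ℂ) + u * Complex.I) / 2 = ((-b / 2 : ℝ) : ℂ) + ((u / 2 : ℝ) : ℂ) * Complex.I by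
      push_cast; ring, Complex.norm_add_mul_I]
    congr 1
    linear_combination (hu + ht) / 4
  have hroots := isGreatest_quadRootNorms hs
  rwa [show (-(b : ℂ) - t * Complex.I) / 2 = (-(b : ℂ) + ((-t : ℝ) : ℂ) * Complex.I) / 2 by
    push_cast; ring, hnorm t rfl, hnorm (-t) (neg_sq t), max_self] at hroots

lemma isGreatest_quadRootNorms_of_le_sq {b c : ℝ} (h : 4 * c ≤ b ^ 2) :
    IsGreatest (quadRootNorms b c) ((|b| + √(b ^ 2 - 4 * c)) / 2) := by
  set t := √(b ^ 2 - 4 * c)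
  have ht : t ^ 2 = b ^ 2 - 4 * c := Real.sq_sqrt (by linarith)
  have hs : discrim 1 (b : ℂ) c = t * t := by
    rw [discrim]
    exact_mod_cast (by linear_combination -ht : b ^ 2 - 4 * 1 * c = t * t)
  have hroots := isGreatest_quadRootNorms hs
  rwa [← Complex.ofReal_neg, ← Complex.ofReal_add, ← Complex.ofReal_sub, ← Complex.ofReal_ofNat,
    ← Complex.ofReal_div, ← Complex.ofReal_div, Complex.norm_real, Complex.norm_real,
    Real.norm_eq_abs, Real.norm_eq_abs, abs_div, abs_div, max_div_div_right (by norm_num),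
    max_abs_add_abs_sub _ _ (Real.sqrt_nonneg _), abs_neg, abs_two] at hroots

theorem stmt_16_general (α β lam : ℝ) (hβ0 : 0 ≤ β) :
    ((1 - Real.sqrt β) ^ 2 ≤ α * lam ∧ α * lam ≤ (1 + Real.sqrt β) ^ 2 →
      IsGreatest {r : ℝ | ∃ z : ℂ,
          z ^ 2 + ((α * lam - 1 - β : ℝ) : ℂ) * z + (β : ℂ) = 0 ∧ r = ‖z‖}
        (Real.sqrt β)) ∧
    (¬ ((1 - Real.sqrt β) ^ 2 ≤ α * lam ∧ α * lam ≤ (1 + Real.sqrt β) ^ 2) →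
      4 * β ≤ (1 + β - α * lam) ^ 2 →
      IsGreatest {r : ℝ | ∃ z : ℂ,
          z ^ 2 + ((α * lam - 1 - β : ℝ) : ℂ) * z + (β : ℂ) = 0 ∧ r = ‖z‖}
        ((|1 + β - α * lam| + Real.sqrt ((1 + β - α * lam) ^ 2 - 4 * β)) / 2)) := by
  refine ⟨fun ⟨hlo, hhi⟩ => isGreatest_quadRootNorms_of_sq_le ?_, fun _ hdisc => ?_⟩
  · have hsq : √β ^ 2 = β := Real.sq_sqrt hβ0
    nlinarith [Real.sqrt_nonneg β]
  · simp only [show 1 + β - α * lam = -(α * lam - 1 - β) by ring, abs_neg, neg_sq] at hdisc ⊢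
    exact isGreatest_quadRootNorms_of_le_sq hdisc

/-- Spectral radius of the heavy-ball modal matrix `Â = [[0,1],[-β,1+β-αλ]]`
(whose eigenvalues are the roots of `z² + (αλ-1-β)z + β`): it equals `√β` when
`(1-√β)² ≤ αλ ≤ (1+√β)²`, and `(|1+β-αλ| + √((1+β-αλ)²-4β))/2` otherwise
(when `(1+β-αλ)² ≥ 4β`), for `0 ≤ β < 1`. -/
theorem stmt_16 (α β lam : ℝ) (hβ0 : 0 ≤ β) (hβ1 : β < 1) :
    ((1 - Real.sqrt β) ^ 2 ≤ α * lam ∧ α * lam ≤ (1 + Real.sqrt β) ^ 2 →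
      IsGreatest {r : ℝ | ∃ z : ℂ,
          z ^ 2 + ((α * lam - 1 - β : ℝ) : ℂ) * z + (β : ℂ) = 0 ∧ r = ‖z‖}
        (Real.sqrt β)) ∧
    (¬ ((1 - Real.sqrt β) ^ 2 ≤ α * lam ∧ α * lam ≤ (1 + Real.sqrt β) ^ 2) →
      4 * β ≤ (1 + β - α * lam) ^ 2 →
      IsGreatest {r : ℝ | ∃ z : ℂ,
          z ^ 2 + ((α * lam - 1 - β : ℝ) : ℂ) * z + (β : ℂ) = 0 ∧ r = ‖z‖}
        ((|1 + β - α * lam| + Real.sqrt ((1 + β - α * lam) ^ 2 - 4 * β)) / 2)) :=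
  stmt_16_general α β lam hβ0
end

section
/- For Nesterov's method on a quadratic with Hessian eigenvalues in [m, κm], with parameters α > 0 and 0 < β < 1, the algorithm is stable (spectral radius of every modal matrix strictly less than 1) if and only if m < (2β+2)/(ακ(2β+1)), i.e., αL < (2β+2)/(2β+1), where L = κm is the largest eigenvalue. -/
/-!
A real monic quadratic `z² - c z + d` has both roots in the open unit disc as soon as `d < 1` and
`|c| < 1 + d`: a nonreal root has modulus `√d`, being one of a conjugate pair with product `d`,
and a real root is trapped in `(-1, 1)` because the quadratic is positive at `±1` and its
vertex `c / 2` lies in `(-1, 1)`. For the modal polynomial of `λ`, with `c = (1+β)(1-αλ)` and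
`d = β(1-αλ)`, these conditions read `0 < αλ < (2β+2)/(2β+1)`, so stability on `[m, L]` is
decided at `λ = L`; when the bound fails there, `1 + c + d ≤ 0` and the smaller root given by the
quadratic formula is a real root `≤ -1`.
-/

theorem exists_quadratic_root_le_neg_one {c d : ℝ} (h : 1 + c + d ≤ 0) :
    ∃ x : ℝ, x ≤ -1 ∧ x ^ 2 - c * x + d = 0 := by
  have hdisc : (c + 2) ^ 2 ≤ c ^ 2 - 4 * d := by linarith
  have hsq := Real.sq_sqrt ((sq_nonneg (c + 2)).trans hdisc)
  refine ⟨(c - √(c ^ 2 - 4 * d)) / 2, ?_, by linear_combination hsq / 4⟩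
  have : c + 2 ≤ √(c ^ 2 - 4 * d) := (le_abs_self _).trans (Real.abs_le_sqrt hdisc)
  linarith

theorem abs_lt_one_of_quadratic_root {c d x : ℝ} (hd : d < 1) (hc : |c| < 1 + d)
    (hx : x ^ 2 - c * x + d = 0) : |x| < 1 := by
  rw [abs_lt] at hc ⊢
  obtain ⟨hc₁, hc₂⟩ := hc
  -- `x² - c x + d = (x + 1)(x - 1 - c) + (1 + c + d) = (x - 1)(x + 1 - c) + (1 - c + d)`
  constructor
  · by_contra! hx1
    nlinarith [mul_nonneg (by linarith : (0:ℝ) ≤ -(x+1)) (by linarith : (0:ℝ) ≤ -(x - 1 - c))]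
  · by_contra! hx1
    nlinarith [mul_nonneg (by linarith : (0:ℝ) ≤ x - 1) (by linarith : (0:ℝ) ≤ x + 1 - c)]

theorem normSq_eq_of_quadratic_root {c d : ℝ} {z : ℂ} (hz : z ^ 2 - c * z + d = 0)
    (him : z.im ≠ 0) : Complex.normSq z = d := by
  have hz' : (starRingEnd ℂ z) ^ 2 - c * starRingEnd ℂ z + d = 0 := by
    simpa using congrArg (starRingEnd ℂ) hz
  have hsub : z - starRingEnd ℂ z ≠ 0 := by
    rw [Complex.sub_conj]; simpa using him
  have hsum : z + starRingEnd ℂ z = c := by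
    have : (z - starRingEnd ℂ z) * (z + starRingEnd ℂ z - c) = 0 := by
      linear_combination hz - hz'
    linear_combination (mul_eq_zero.1 this).resolve_left hsub
  apply Complex.ofReal_injective
  rw [← Complex.mul_conj]
  linear_combination z * hsum - hz

theorem norm_lt_one_of_quadratic_root {c d : ℝ} (hd : d < 1) (hc : |c| < 1 + d) {z : ℂ}
    (hz : z ^ 2 - c * z + d = 0) : ‖z‖ < 1 := by
  by_cases him : z.im = 0
  · have hre : z = z.re := Complex.ext rfl him
    rw [hre] at hz ⊢
    rw [Complex.norm_real, Real.norm_eq_abs]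
    exact abs_lt_one_of_quadratic_root hd hc (by exact_mod_cast hz)
  · rw [← sq_lt_one_iff₀ (norm_nonneg z), Complex.sq_norm, normSq_eq_of_quadratic_root hz him]
    exact hd

/-- Stability of Nesterov's method on a quadratic with Hessian spectrum in
`[m, κm]`: with `α > 0` and `0 < β < 1`, every modal matrix
`Â(λ) = [[0,1],[-β(1-αλ),(1+β)(1-αλ)]]` (whose eigenvalues are the roots of
`z² - (1+β)(1-αλ)z + β(1-αλ)`) has spectral radius `< 1` for all `λ ∈ [m, κm]`
if and only if `m < (2β+2)/(ακ(2β+1))`. -/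
theorem stmt_17 (α β m κ : ℝ) (hα : 0 < α) (hβ0 : 0 < β) (hβ1 : β < 1)
    (hm : 0 < m) (hκ : 1 ≤ κ) :
    (∀ lam ∈ Set.Icc m (κ * m), ∀ z : ℂ,
        z ^ 2 - (((1 + β) * (1 - α * lam) : ℝ) : ℂ) * z + ((β * (1 - α * lam) : ℝ) : ℂ) = 0 →
        ‖z‖ < 1) ↔
      m < (2 * β + 2) / (α * κ * (2 * β + 1)) := by
  rw [lt_div_iff₀ (by positivity)]
  constructor
  · intro H
    by_contra! hL
    obtain ⟨x, hx, hroot⟩ := exists_quadratic_root_le_neg_one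
      (c := (1 + β) * (1 - α * (κ * m))) (d := β * (1 - α * (κ * m))) (by linarith)
    have := H (κ * m) ⟨le_mul_of_one_le_left hm.le hκ, le_rfl⟩ x (by exact_mod_cast hroot)
    rw [Complex.norm_real, Real.norm_eq_abs, abs_lt] at this
    linarith
  · rintro hL lam ⟨hmlam, hlamL⟩ z hz
    have hαlam : 0 < α * lam := mul_pos hα (hm.trans_le hmlam)
    exact norm_lt_one_of_quadratic_root (by nlinarith) (abs_lt.2 ⟨by nlinarith, by linarith⟩) hz
end

section
/- For Nesterov's accelerated method with any stabilizing parameters α > 0, 0 < β < 1 applied to a strongly convex quadratic with condition number κ > 2, smallest Hessian eigenvalue m, and σ = 1, the modal variance amplification at m satisfies Ĵ_na(m) ≥ κ²/(24(1-β)κ + 32β). -/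
/-! With `t = α m`, the stability bound gives `κ t < 2`, hence `t < 1` because `κ > 2`. The
numerator of `Ĵ_na(m)` is then at least `1`, while dropping the factor `2(1+β) - (2β+1)t ≤ 2(1+β)`
of the denominator `D` and using `κ t < 2` gives `κ² D ≤ 8(1-β)κ + 16β`. -/

lemma mul_lt_two_of_lt_stability_bound {α β m κ : ℝ} (hα : 0 < α) (hβ : 0 ≤ β) (hκ : 0 < κ)
    (hstab : m < (2 * β + 2) / (α * κ * (2 * β + 1))) :
    κ * (α * m) < 2 := by
  rw [lt_div_iff₀ (by positivity)] at hstab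
  nlinarith

lemma sq_mul_nesterov_denominator_le {β κ t : ℝ} (hβ0 : 0 ≤ β) (hβ1 : β ≤ 1) (hκ : 0 ≤ κ)
    (ht : 0 ≤ t) (hκt : κ * t ≤ 2) :
    κ ^ 2 * (t * (1 - β * (1 - t)) * (2 * (1 + β) - (2 * β + 1) * t)) ≤
      8 * (1 - β) * κ + 16 * β := by
  have hmid : 0 ≤ 1 - β * (1 - t) := by nlinarith
  calc κ ^ 2 * (t * (1 - β * (1 - t)) * (2 * (1 + β) - (2 * β + 1) * t))
      ≤ κ ^ 2 * (t * (1 - β * (1 - t)) * (2 * (1 + β))) := by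
        gcongr
        nlinarith
    _ = 2 * (1 + β) * (κ * t) * ((1 - β) * κ + β * (κ * t)) := by ring
    _ ≤ 2 * (1 + β) * 2 * ((1 - β) * κ + β * 2) := by
        gcongr
    _ ≤ 8 * (1 - β) * κ + 16 * β := by nlinarith [mul_nonneg (sub_nonneg.mpr hβ1) hκ]

/-- Lower bound on the modal variance amplification of Nesterov's method at
the smallest Hessian eigenvalue `m` (with `σ = 1`): for any stabilizing
`α > 0`, `0 < β < 1` and condition number `κ > 2`,
`Ĵ_na(m) ≥ κ²/(24(1-β)κ + 32β)`. -/
theorem stmt_18 (α β m κ : ℝ) (hα : 0 < α) (hβ0 : 0 < β) (hβ1 : β < 1)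
    (hm : 0 < m) (hκ : 2 < κ)
    (hstab : m < (2 * β + 2) / (α * κ * (2 * β + 1))) :
    κ ^ 2 / (24 * (1 - β) * κ + 32 * β) ≤
      (1 + β * (1 - α * m)) /
        (α * m * (1 - β * (1 - α * m)) * (2 * (1 + β) - (2 * β + 1) * (α * m))) := by
  have hκt := mul_lt_two_of_lt_stability_bound hα hβ0.le (by linarith) hstab
  set t := α * m
  have ht0 : 0 < t := mul_pos hα hm
  have ht1 : t < 1 := by nlinarith
  have hA : 0 < 24 * (1 - β) * κ + 32 * β := by nlinarith
  have hD : 0 < t * (1 - β * (1 - t)) * (2 * (1 + β) - (2 * β + 1) * t) := by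
    have : 0 < 1 - β * (1 - t) := by nlinarith
    have : 0 < 2 * (1 + β) - (2 * β + 1) * t := by nlinarith
    positivity
  rw [div_le_div_iff₀ hA hD]
  calc κ ^ 2 * (t * (1 - β * (1 - t)) * (2 * (1 + β) - (2 * β + 1) * t))
      ≤ 8 * (1 - β) * κ + 16 * β :=
        sq_mul_nesterov_denominator_le hβ0.le hβ1.le (by linarith) ht0.le hκt.le
    _ ≤ 24 * (1 - β) * κ + 32 * β := by nlinarith [mul_pos (sub_pos.mpr hβ1) (by linarith : 0 < κ)]
    _ ≤ (1 + β * (1 - t)) * (24 * (1 - β) * κ + 32 * β) :=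
        le_mul_of_one_le_left hA.le (by nlinarith)
end
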